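/- arXiv:2210.05319 — 4 statements merged into one kernel-verified Lean document; each statement's English description precedes it below -/
import Mathlib

section
/- Consider the fuzzy q-closest ODE system ẋ_i = v_i, v̇_i = −(1/q) Σ_j ∫_{B(x_i,R(x_i))} φ(z−x_j) dz (v_i − v_j), where R(x_i) is defined so that Σ_j ∫_{B(x_i,R(x_i))} φ(z−x_j) dz = q. For any solution on [0,T], the convex hull of the velocities is nonincreasing in time: conv(v_1(t),…,v_N(t)) ⊆ conv(v_1(0),…,v_N(0)) for all t ∈ [0,T]. -/
open MeasureTheory Metric

lemma infDist_convex_sum_le {E : Type*} [NormedAddCommGroup E] [NormedSpace ℝ E]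
    {ι : Type*} [Fintype ι] (θ : ι → ℝ) (u : ι → E) {K : Set E}
    (hKc : Convex ℝ K) (hKcomp : IsCompact K) (hKne : K.Nonempty)
    (hθ : ∀ j, 0 ≤ θ j) (hsum : ∑ j, θ j = 1) :
    infDist (∑ j, θ j • u j) K ≤ ∑ j, θ j * infDist (u j) K := by
  choose w hw hdw using fun j => hKcomp.exists_infDist_eq_dist hKne (u j)
  have hmem : ∑ j, θ j • w j ∈ K := hKc.sum_mem (fun j _ => hθ j) hsum (fun j _ => hw j)
  calc infDist (∑ j, θ j • u j) K ≤ dist (∑ j, θ j • u j) (∑ j, θ j • w j) :=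
        infDist_le_dist_of_mem hmem
  _ ≤ ∑ j, θ j * infDist (u j) K := by
      rw [dist_eq_norm, ← Finset.sum_sub_distrib]
      refine (norm_sum_le _ _).trans (Finset.sum_le_sum fun j _ => ?_)
      rw [← smul_sub, norm_smul, Real.norm_eq_abs, abs_of_nonneg (hθ j), hdw j, dist_eq_norm]

/-- For the fuzzy q-closest ODE system, the convex hull of
the velocities is nonincreasing in time. -/
theorem stmt_2 {d N : ℕ} (T q σ : ℝ) (hT : 0 ≤ T) (hq : 0 < q) (hqN : q ≤ N)
    (φ : EuclideanSpace ℝ (Fin d) → ℝ)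
    (hφnonneg : ∀ z, 0 ≤ φ z)
    (hφsupp : Function.support φ ⊆ ball 0 σ)
    (hφint : ∫ z, φ z = 1)
    (x v : ℝ → Fin N → EuclideanSpace ℝ (Fin d))
    (R : ℝ → Fin N → ℝ)
    (hR : ∀ t ∈ Set.Icc 0 T, ∀ i,
      ∑ j, ∫ z in closedBall (x t i) (R t i), φ (z - x t j) = q)
    (hx : ∀ t ∈ Set.Icc 0 T, ∀ i, HasDerivAt (fun s => x s i) (v t i) t)
    (hv : ∀ t ∈ Set.Icc 0 T, ∀ i, HasDerivAt (fun s => v s i)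
      (-(1 / q) • ∑ j, (∫ z in closedBall (x t i) (R t i), φ (z - x t j)) •
        (v t i - v t j)) t) :
    ∀ t ∈ Set.Icc 0 T, ∀ i,
      v t i ∈ convexHull ℝ (Set.range (fun j => v 0 j)) := by
  -- basic setup
  set K : Set (EuclideanSpace ℝ (Fin d)) := convexHull ℝ (Set.range fun j => v 0 j) with hK
  have hN : 0 < N := by
    have : (0:ℝ) < N := lt_of_lt_of_le hq hqN
    exact_mod_cast this
  haveI : Nonempty (Fin N) := ⟨⟨0, hN⟩⟩
  have hKc : Convex ℝ K := convex_convexHull ℝ _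
  have hfin : (Set.range fun j => v 0 j).Finite := Set.finite_range _
  have hKcomp : IsCompact K := hfin.isCompact_convexHull (𝕜 := ℝ)
  have hKclosed : IsClosed K := hfin.isClosed_convexHull (𝕜 := ℝ)
  have hKne : K.Nonempty := (Set.range_nonempty _).convexHull
  -- interaction coefficients
  set c : ℝ → Fin N → Fin N → ℝ :=
    fun t i j => ∫ z in closedBall (x t i) (R t i), φ (z - x t j) with hc
  have hc0 : ∀ t i j, 0 ≤ c t i j := fun t i j => integral_nonneg fun z => hφnonneg _
  set θ : ℝ → Fin N → Fin N → ℝ := fun t i j => c t i j / q with hθ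
  have hθ0 : ∀ t i j, 0 ≤ θ t i j := fun t i j => div_nonneg (hc0 t i j) hq.le
  have hθsum : ∀ t ∈ Set.Icc 0 T, ∀ i, ∑ j, θ t i j = 1 := by
    intro t ht i
    simp only [hθ, hc, ← Finset.sum_div, hR t ht i, div_self hq.ne']
  have hθle1 : ∀ t ∈ Set.Icc 0 T, ∀ i j, θ t i j ≤ 1 := by
    intro t ht i j
    rw [div_le_one hq]
    rw [← hR t ht i]
    exact Finset.single_le_sum (fun k _ => hc0 t i k) (Finset.mem_univ j)
  -- distance functions
  set f : Fin N → ℝ → ℝ := fun i t => infDist (v t i) K with hf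
  set g : ℝ → ℝ := fun t => ∑ i, f i t with hg
  have hf0 : ∀ i t, 0 ≤ f i t := fun i t => infDist_nonneg
  have hg0 : ∀ t, 0 ≤ g t := fun t => Finset.sum_nonneg fun i _ => hf0 i t
  have hginit : g 0 ≤ 0 := by
    apply le_of_eq
    apply Finset.sum_eq_zero
    intro i _
    exact infDist_zero_of_mem (subset_convexHull ℝ _ ⟨i, rfl⟩)
  -- continuity
  have hvc : ∀ i, ContinuousOn (fun t => v t i) (Set.Icc 0 T) := fun i t ht =>
    ((hv t ht i).continuousAt).continuousWithinAt
  have hgc : ContinuousOn g (Set.Icc 0 T) := by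
    apply continuousOn_finset_sum
    intro i _
    exact (continuous_infDist_pt K).comp_continuousOn (hvc i)
  -- the derivative rewritten as b - v_i
  have hder : ∀ t ∈ Set.Icc 0 T, ∀ i,
      HasDerivAt (fun s => v s i) ((∑ j, θ t i j • v t j) - v t i) t := by
    intro t ht i
    convert hv t ht i using 1
    have h1 : (-(1 / q) : ℝ) • ∑ j, c t i j • (v t i - v t j)
        = ∑ j, θ t i j • (v t j - v t i) := by
      rw [Finset.smul_sum]
      refine Finset.sum_congr rfl fun j _ => ?_
      rw [smul_smul, smul_sub, smul_sub, hθ]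
      simp only [neg_mul, neg_smul, neg_sub, one_div]
      rw [div_eq_inv_mul]
      abel
    rw [h1]
    symm
    simp only [smul_sub]
    rw [Finset.sum_sub_distrib, ← Finset.sum_smul, hθsum t ht i, one_smul]
  -- Gronwall
  have main : ∀ t ∈ Set.Icc 0 T, g t ≤ gronwallBound 0 N 0 (t - 0) := by
    apply le_gronwallBound_of_liminf_deriv_right_le (f' := fun t => (N : ℝ) * g t) hgc
    · -- liminf slope condition
      intro t₀ ht₀ r hr
      have ht₀' : t₀ ∈ Set.Icc 0 T := ⟨ht₀.1, ht₀.2.le⟩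
      set b : Fin N → EuclideanSpace ℝ (Fin d) := fun i => ∑ j, θ t₀ i j • v t₀ j with hb
      set D : Fin N → EuclideanSpace ℝ (Fin d) := fun i => b i - v t₀ i with hD
      -- error term
      set E : ℝ → ℝ := fun z => ∑ i, ‖z - t₀‖⁻¹ * ‖v z i - v t₀ i - (z - t₀) • D i‖ with hE
      have hEtend : Filter.Tendsto E (nhdsWithin t₀ (Set.Ioi t₀)) (nhds 0) := by
        have : Filter.Tendsto E (nhds t₀) (nhds (∑ i : Fin N, (0:ℝ))) := by
          apply tendsto_finset_sum
          intro i _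
          exact hasDerivAt_iff_tendsto.1 (hder t₀ ht₀' i)
        simpa using this.mono_left nhdsWithin_le_nhds
      -- dist of b i to K is at most g t₀
      have hbK : ∀ i, infDist (b i) K ≤ g t₀ := by
        intro i
        calc infDist (b i) K ≤ ∑ j, θ t₀ i j * f j t₀ :=
              infDist_convex_sum_le _ _ hKc hKcomp hKne (hθ0 t₀ i) (hθsum t₀ ht₀' i)
        _ ≤ ∑ j, f j t₀ := by
              refine Finset.sum_le_sum fun j _ => ?_
              calc θ t₀ i j * f j t₀ ≤ 1 * f j t₀ :=
                    mul_le_mul_of_nonneg_right (hθle1 t₀ ht₀' i j) (hf0 j t₀)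
              _ = f j t₀ := one_mul _
      -- pointwise slope bound for each i
      have key : ∀ z, t₀ < z → z ≤ t₀ + 1 →
          (z - t₀)⁻¹ * (g z - g t₀) ≤ E z + ((N : ℝ) * g t₀ - g t₀) := by
        intro z hz hz1
        set h : ℝ := z - t₀ with hh
        have hhpos : 0 < h := by simp [hh]; linarith
        have hh1 : h ≤ 1 := by simp [hh]; linarith
        have slope_i : ∀ i, f i z - f i t₀ ≤ ‖v z i - v t₀ i - h • D i‖ + h * (g t₀ - f i t₀) := by
          intro i
          set p : EuclideanSpace ℝ (Fin d) := v t₀ i + h • D i with hp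
          have hp' : p = ∑ j : Fin 2, (![1 - h, h] j) • (![v t₀ i, b i] j) := by
            simp [hp, hD, Fin.sum_univ_two, sub_smul, smul_sub]
            abel
          have hinfp : infDist p K ≤ (1 - h) * f i t₀ + h * infDist (b i) K := by
            rw [hp']
            have := infDist_convex_sum_le (![1 - h, h]) (![v t₀ i, b i]) hKc hKcomp hKne
              (fun j => by fin_cases j <;> simp <;> linarith)
              (by simp [Fin.sum_univ_two])
            simpa [Fin.sum_univ_two] using this
          have h2 : f i z ≤ dist (v z i) p + infDist p K := by
            rw [dist_comm]
            exact (infDist_le_infDist_add_dist).trans (by rw [add_comm, dist_comm])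
          have h3 : dist (v z i) p = ‖v z i - v t₀ i - h • D i‖ := by
            rw [dist_eq_norm, hp]
            congr 1
            abel
          have h4 : infDist (b i) K ≤ g t₀ := hbK i
          calc f i z - f i t₀ ≤ (‖v z i - v t₀ i - h • D i‖ + ((1 - h) * f i t₀ + h * g t₀))
                - f i t₀ := by
                have := h2.trans (by linarith [hinfp,
                  mul_le_mul_of_nonneg_left h4 hhpos.le] : dist (v z i) p + infDist p K ≤
                    dist (v z i) p + ((1 - h) * f i t₀ + h * g t₀))
                rw [h3] at this
                linarith
          _ = ‖v z i - v t₀ i - h • D i‖ + h * (g t₀ - f i t₀) := by ring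
        have hsum : g z - g t₀ ≤ (∑ i, ‖v z i - v t₀ i - h • D i‖) + h * ((N : ℝ) * g t₀ - g t₀) := by
          have : g z - g t₀ = ∑ i, (f i z - f i t₀) := by
            simp [hg, Finset.sum_sub_distrib]
          rw [this]
          calc ∑ i, (f i z - f i t₀)
              ≤ ∑ i, (‖v z i - v t₀ i - h • D i‖ + h * (g t₀ - f i t₀)) :=
                Finset.sum_le_sum fun i _ => slope_i i
          _ = (∑ i, ‖v z i - v t₀ i - h • D i‖) + h * ((N : ℝ) * g t₀ - g t₀) := by
                rw [Finset.sum_add_distrib, ← Finset.mul_sum]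
                congr 1
                rw [Finset.mul_sum, ← Finset.mul_sum]
                congr 1
                rw [Finset.sum_sub_distrib]
                simp [hg, Finset.sum_const, mul_comm]
        have hnorm : ‖h‖ = h := by rw [Real.norm_eq_abs, abs_of_pos hhpos]
        calc (z - t₀)⁻¹ * (g z - g t₀) = h⁻¹ * (g z - g t₀) := by rw [hh]
        _ ≤ h⁻¹ * ((∑ i, ‖v z i - v t₀ i - h • D i‖) + h * ((N : ℝ) * g t₀ - g t₀)) :=
              mul_le_mul_of_nonneg_left hsum (inv_nonneg.2 hhpos.le)
        _ = E z + ((N : ℝ) * g t₀ - g t₀) := by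
              rw [mul_add, hE]
              congr 1
              · rw [Finset.mul_sum]
                refine Finset.sum_congr rfl fun i _ => ?_
                rw [← hh, hnorm]
              · rw [← mul_assoc, inv_mul_cancel₀ hhpos.ne', one_mul]
      -- conclude frequently
      have hgap : (N : ℝ) * g t₀ - g t₀ < r := by
        have := hg0 t₀
        linarith
      have hev : ∀ᶠ z in nhdsWithin t₀ (Set.Ioi t₀),
          (z - t₀)⁻¹ * (g z - g t₀) < r := by
        have h1 : ∀ᶠ z in nhdsWithin t₀ (Set.Ioi t₀), E z < r - ((N : ℝ) * g t₀ - g t₀) :=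
          hEtend.eventually_lt_const (by linarith)
        have h2 : Set.Ioo t₀ (t₀ + 1) ∈ nhdsWithin t₀ (Set.Ioi t₀) :=
          Ioo_mem_nhdsGT_of_mem ⟨le_refl _, by linarith⟩
        filter_upwards [h1, h2] with z hEz hzmem
        obtain ⟨hz, hz1⟩ : t₀ < z ∧ z ≤ t₀ + 1 := ⟨hzmem.1, hzmem.2.le⟩
        calc (z - t₀)⁻¹ * (g z - g t₀) ≤ E z + ((N : ℝ) * g t₀ - g t₀) := key z hz hz1
        _ < r := by linarith
      exact hev.frequently
    · exact hginit
    · intro t₀ ht₀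
      simp
  -- finish
  intro t ht i
  have hgt : g t = 0 := le_antisymm (by simpa [gronwallBound_ε0_δ0] using main t ht) (hg0 t)
  have hft : f i t = 0 := by
    have := (Finset.sum_eq_zero_iff_of_nonneg (fun j _ => hf0 j t)).1 hgt i (Finset.mem_univ i)
    exact this
  exact (hKclosed.mem_iff_infDist_zero hKne).2 hft
end

section
/- For any solution (x,v) of the fuzzy q-closest system on [0,T], the maximal speed is nonincreasing: sup_{t∈[0,T]} max_i |v_i(t)| ≤ max_i |v_i(0)|, and consequently max_i |x_i(t)| ≤ max_i |x_i(0)| + t·max_i |v_i(0)| for all t ∈ [0,T]. -/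
open MeasureTheory Metric

/-- For the fuzzy q-closest system the maximal speed is
nonincreasing, and consequently positions grow at most linearly. -/
theorem stmt_3 {d N : ℕ} (T q σ : ℝ) (hT : 0 ≤ T) (hq : 0 < q) (hqN : q ≤ N)
    (φ : EuclideanSpace ℝ (Fin d) → ℝ)
    (hφnonneg : ∀ z, 0 ≤ φ z)
    (hφsupp : Function.support φ ⊆ ball 0 σ)
    (hφint : ∫ z, φ z = 1)
    (x v : ℝ → Fin N → EuclideanSpace ℝ (Fin d))
    (R : ℝ → Fin N → ℝ)
    (hR : ∀ t ∈ Set.Icc 0 T, ∀ i,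
      ∑ j, ∫ z in closedBall (x t i) (R t i), φ (z - x t j) = q)
    (hx : ∀ t ∈ Set.Icc 0 T, ∀ i, HasDerivAt (fun s => x s i) (v t i) t)
    (hv : ∀ t ∈ Set.Icc 0 T, ∀ i, HasDerivAt (fun s => v s i)
      (-(1 / q) • ∑ j, (∫ z in closedBall (x t i) (R t i), φ (z - x t j)) •
        (v t i - v t j)) t) :
    ∀ t ∈ Set.Icc 0 T, ∀ i,
      ‖v t i‖ ≤ Finset.univ.sup' ⟨i, Finset.mem_univ i⟩ (fun j => ‖v 0 j‖) ∧
      ‖x t i‖ ≤ Finset.univ.sup' ⟨i, Finset.mem_univ i⟩ (fun j => ‖x 0 j‖) +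
        t * Finset.univ.sup' ⟨i, Finset.mem_univ i⟩ (fun j => ‖v 0 j‖) := by
  intro t ht i
  have hNe : (Finset.univ : Finset (Fin N)).Nonempty := ⟨i, Finset.mem_univ i⟩
  set Mv : ℝ := Finset.univ.sup' hNe (fun j => ‖v 0 j‖) with hMvdef
  have hMv0 : 0 ≤ Mv :=
    le_trans (norm_nonneg (v 0 i)) (Finset.le_sup' (fun j => ‖v 0 j‖) (Finset.mem_univ i))
  -- the exponentially weighted velocities
  set f : ℝ → (Fin N → EuclideanSpace ℝ (Fin d)) :=
    fun s j => Real.exp s • v s j with hfdef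
  set f' : ℝ → (Fin N → EuclideanSpace ℝ (Fin d)) :=
    fun s j => Real.exp s • ((1/q) •
      ∑ k, (∫ z in closedBall (x s j) (R s j), φ (z - x s k)) • v s k) with hf'def
  have hderiv : ∀ s ∈ Set.Icc 0 T, HasDerivAt f (f' s) s := by
    intro s hs
    rw [hasDerivAt_pi]
    intro j
    have hvd := hv s hs j
    have he : HasDerivAt Real.exp (Real.exp s) s := Real.hasDerivAt_exp s
    have := he.smul hvd
    convert this using 1
    · rfl
    have hsum : ∑ k, (∫ z in closedBall (x s j) (R s j), φ (z - x s k)) •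
        (v s j - v s k)
        = q • v s j - ∑ k, (∫ z in closedBall (x s j) (R s j), φ (z - x s k)) • v s k := by
      rw [← hR s hs j]
      rw [Finset.sum_smul, ← Finset.sum_sub_distrib]
      exact Finset.sum_congr rfl fun k _ => smul_sub _ _ _
    have hq0 : q ≠ 0 := hq.ne'
    simp only [hf'def]
    rw [hsum]
    match_scalars <;> field_simp <;> ring
  have hcont : ContinuousOn f (Set.Icc 0 T) := fun s hs =>
    (hderiv s hs).continuousAt.continuousWithinAt
  have hbound : ∀ s ∈ Set.Ico (0:ℝ) T, ‖f' s‖ ≤ 1 * ‖f s‖ + 0 := by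
    intro s hs
    rw [one_mul, add_zero]
    rw [pi_norm_le_iff_of_nonneg (norm_nonneg _)]
    intro j
    have hsIcc : s ∈ Set.Icc 0 T := Set.mem_Icc_of_Ico hs
    have h1 : ‖f' s j‖ = Real.exp s * ((1/q) *
        ‖∑ k, (∫ z in closedBall (x s j) (R s j), φ (z - x s k)) • v s k‖) := by
      simp only [hf'def, norm_smul, Real.norm_eq_abs, abs_of_nonneg (Real.exp_pos s).le,
        abs_of_nonneg (by positivity : (0:ℝ) ≤ 1/q)]
    rw [h1]
    have h2 : Real.exp s * ((1/q) *
        ‖∑ k, (∫ z in closedBall (x s j) (R s j), φ (z - x s k)) • v s k‖)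
        ≤ (1/q) * ∑ k, (∫ z in closedBall (x s j) (R s j), φ (z - x s k)) * ‖f s k‖ := by
      rw [mul_comm (Real.exp s), mul_assoc]
      apply mul_le_mul_of_nonneg_left _ (by positivity : (0:ℝ) ≤ 1/q)
      rw [mul_comm]
      calc Real.exp s * ‖∑ k, (∫ z in closedBall (x s j) (R s j), φ (z - x s k)) • v s k‖
          ≤ Real.exp s * ∑ k, ‖(∫ z in closedBall (x s j) (R s j), φ (z - x s k)) • v s k‖ :=
            mul_le_mul_of_nonneg_left (norm_sum_le _ _) (Real.exp_pos s).le
        _ = ∑ k, (∫ z in closedBall (x s j) (R s j), φ (z - x s k)) * ‖f s k‖ := by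
            rw [Finset.mul_sum]
            refine Finset.sum_congr rfl fun k _ => ?_
            have hak : 0 ≤ ∫ z in closedBall (x s j) (R s j), φ (z - x s k) :=
              integral_nonneg fun z => hφnonneg _
            simp only [hfdef, norm_smul, Real.norm_eq_abs, abs_of_nonneg hak,
              abs_of_nonneg (Real.exp_pos s).le]
            ring
    refine h2.trans ?_
    have h3 : ∑ k, (∫ z in closedBall (x s j) (R s j), φ (z - x s k)) * ‖f s k‖
        ≤ ∑ k, (∫ z in closedBall (x s j) (R s j), φ (z - x s k)) * ‖f s‖ := by
      refine Finset.sum_le_sum fun k _ => ?_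
      exact mul_le_mul_of_nonneg_left (norm_le_pi_norm (f s) k)
        (integral_nonneg fun z => hφnonneg _)
    calc (1/q) * ∑ k, (∫ z in closedBall (x s j) (R s j), φ (z - x s k)) * ‖f s k‖
        ≤ (1/q) * ∑ k, (∫ z in closedBall (x s j) (R s j), φ (z - x s k)) * ‖f s‖ :=
          mul_le_mul_of_nonneg_left h3 (by positivity)
      _ = ‖f s‖ := by
          rw [← Finset.sum_mul, hR s hsIcc j, ← mul_assoc, one_div_mul_cancel hq.ne', one_mul]
  have hf0 : ‖f 0‖ ≤ Mv := by
    rw [pi_norm_le_iff_of_nonneg hMv0]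
    intro j
    simp only [hfdef, Real.exp_zero, one_smul]
    exact Finset.le_sup' (fun j => ‖v 0 j‖) (Finset.mem_univ j)
  have hgron := norm_le_gronwallBound_of_norm_deriv_right_le hcont
    (fun s hs => (hderiv s (Set.mem_Icc_of_Ico hs)).hasDerivWithinAt) hf0 hbound
  -- velocity bound at all times
  have key : ∀ s ∈ Set.Icc (0:ℝ) T, ∀ j, ‖v s j‖ ≤ Mv := by
    intro s hs j
    have h := hgron s hs
    rw [gronwallBound_ε0, sub_zero, one_mul] at h
    have h2 : ‖f s j‖ ≤ Mv * Real.exp s := le_trans (norm_le_pi_norm (f s) j) h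
    have h3 : Real.exp s * ‖v s j‖ ≤ Mv * Real.exp s := by
      simpa [hfdef, norm_smul, abs_of_nonneg (Real.exp_pos s).le] using h2
    nlinarith [Real.exp_pos s, norm_nonneg (v s j)]
  refine ⟨key t ht i, ?_⟩
  have hmean := (convex_Icc (0:ℝ) T).norm_image_sub_le_of_norm_hasDerivWithin_le
    (f := fun s => x s i) (f' := fun s => v s i)
    (fun s hs => (hx s hs i).hasDerivWithinAt)
    (fun s hs => key s hs i) (Set.left_mem_Icc.2 hT) ht
  have : ‖x t i‖ ≤ ‖x 0 i‖ + Mv * t := by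
    have h4 : ‖x t i - x 0 i‖ ≤ Mv * t := by
      simpa [abs_of_nonneg ht.1] using hmean
    calc ‖x t i‖ ≤ ‖x 0 i‖ + ‖x t i - x 0 i‖ := by
          simpa using norm_add_le (x 0 i) (x t i - x 0 i)
      _ ≤ ‖x 0 i‖ + Mv * t := by linarith
  refine this.trans ?_
  have : ‖x 0 i‖ ≤ Finset.univ.sup' hNe (fun j => ‖x 0 j‖) :=
    Finset.le_sup' (fun j => ‖x 0 j‖) (Finset.mem_univ i)
  nlinarith
end

section
/- Let f be a compactly supported probability measure on ℝ^{2d} with spatial support diameter D_x and velocity support diameter D_v, and define F[f](x,v) = (1/η) ∫_{ℝ^{2d}} ∫_{B(x,R[f](x))} φ(z−y) (v−w) dz df(y,w). Then F[f] is globally Lipschitz in (x,v) on the support of f: |F[f](x,v) − F[f](x',v')| ≤ c₀(|x−x'| + |v−v'|), where c₀ depends only on φ, η, d, D_x, D_v. -/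
open MeasureTheory Metric NNReal

/-- The fuzzy radius `R[μ](x)`. -/
noncomputable def Rrad {d : ℕ} (η : ℝ) (φ : EuclideanSpace ℝ (Fin d) → ℝ)
    (μ : Measure (EuclideanSpace ℝ (Fin d) × EuclideanSpace ℝ (Fin d)))
    (x : EuclideanSpace ℝ (Fin d)) : ℝ :=
  sInf {r : ℝ | 0 < r ∧ η ≤ ∫ yw, (∫ z in closedBall x r, φ (z - yw.1)) ∂μ}

/-- The fuzzy alignment force `F[μ](x,v)`. -/
noncomputable def Force {d : ℕ} (η : ℝ) (φ : EuclideanSpace ℝ (Fin d) → ℝ)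
    (μ : Measure (EuclideanSpace ℝ (Fin d) × EuclideanSpace ℝ (Fin d)))
    (x v : EuclideanSpace ℝ (Fin d)) : EuclideanSpace ℝ (Fin d) :=
  (1 / η) • ∫ yw,
    (∫ z in closedBall x (Rrad η φ μ x), φ (z - yw.1)) • (v - yw.2) ∂μ

section Helpers

variable {d : ℕ}
local notation "E" => EuclideanSpace ℝ (Fin d)

lemma phi_hcs {σ : ℝ} {φ : E → ℝ} (hφsupp : Function.support φ ⊆ ball 0 σ) :
    HasCompactSupport φ := by
  apply HasCompactSupport.intro (isCompact_closedBall (0:E) σ)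
  intro z hz
  by_contra h
  exact hz (ball_subset_closedBall (hφsupp h))

lemma phi_int {σ : ℝ} {φ : E → ℝ} (hφc : Continuous φ)
    (hφsupp : Function.support φ ⊆ ball 0 σ) : Integrable φ :=
  hφc.integrable_of_hasCompactSupport (phi_hcs hφsupp)

lemma phi_int_addsub {σ : ℝ} {φ : E → ℝ} (hφc : Continuous φ)
    (hφsupp : Function.support φ ⊆ ball 0 σ) (x y : E) :
    Integrable (fun z : E => φ (z + x - y)) := by
  have h : (fun z : E => φ (z + x - y)) = fun z => φ (z + (x - y)) := by
    funext z; rw [add_sub_assoc]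
  rw [h]; exact (phi_int hφc hφsupp).comp_add_right _

lemma shift_int (φ : E → ℝ) (x y : E) (r : ℝ) :
    ∫ z in closedBall x r, φ (z - y) = ∫ z in closedBall (0:E) r, φ (z + x - y) := by
  have h₁ : MeasurePreserving (fun z : E => z + x) volume volume :=
    measurePreserving_add_right volume x
  have h₂ : MeasurableEmbedding (fun z : E => z + x) :=
    (Homeomorph.addRight x).measurableEmbedding
  have hpre : (fun z : E => z + x) ⁻¹' closedBall x r = closedBall (0:E) r := by
    ext z; simp [mem_closedBall, dist_eq_norm]
  calc ∫ z in closedBall x r, φ (z - y)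
      = ∫ z in (fun z : E => z + x) ⁻¹' closedBall x r, φ (z + x - y) :=
        (h₁.setIntegral_preimage_emb h₂ (fun z => φ (z - y)) _).symm
    _ = ∫ z in closedBall (0:E) r, φ (z + x - y) := by rw [hpre]

lemma lipx {σ : ℝ} {φ : E → ℝ} {Lφ : ℝ≥0} (hφLip : LipschitzWith Lφ φ)
    (hφsupp : Function.support φ ⊆ ball 0 σ)
    (x x' y : E) (r : ℝ) :
    |(∫ z in closedBall x r, φ (z - y)) - ∫ z in closedBall x' r, φ (z - y)|
      ≤ (volume (closedBall (0:E) r)).toReal * ((Lφ : ℝ) * ‖x - x'‖) := by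
  rw [shift_int φ x y r, shift_int φ x' y r, ← integral_sub
    ((phi_int_addsub hφLip.continuous hφsupp x y).integrableOn)
    ((phi_int_addsub hφLip.continuous hφsupp x' y).integrableOn)]
  rw [← Real.norm_eq_abs, mul_comm]
  apply norm_setIntegral_le_of_norm_le_const_ae' measure_closedBall_lt_top
  filter_upwards with z _
  have h1 := hφLip.dist_le_mul (z + x - y) (z + x' - y)
  rw [Real.dist_eq] at h1
  refine le_trans h1 ?_
  gcongr
  rw [dist_eq_norm]
  have h2 : z + x - y - (z + x' - y) = x - x' := by abel
  rw [h2]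

lemma bound_a {Cφ : ℝ} {φ : E → ℝ} (hCφ : ∀ z, |φ z| ≤ Cφ)
    (x y : E) (r : ℝ) :
    |∫ z in closedBall x r, φ (z - y)| ≤ Cφ * (volume (closedBall x r)).toReal := by
  rw [← Real.norm_eq_abs]
  apply norm_setIntegral_le_of_norm_le_const_ae' measure_closedBall_lt_top
  filter_upwards with z _
  exact hCφ _

lemma lipy {σ : ℝ} {φ : E → ℝ} {Lφ : ℝ≥0} (hφLip : LipschitzWith Lφ φ)
    (hφsupp : Function.support φ ⊆ ball 0 σ) (x : E) (r : ℝ) :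
    Continuous (fun y : E => ∫ z in closedBall x r, φ (z - y)) := by
  have key : ∀ y y' : E,
      dist (∫ z in closedBall x r, φ (z - y)) (∫ z in closedBall x r, φ (z - y'))
        ≤ ((volume (closedBall x r)).toReal * Lφ) * dist y y' := by
    intro y y'
    rw [Real.dist_eq, ← integral_sub
      ((phi_int hφLip.continuous hφsupp).comp_sub_right y).integrableOn
      ((phi_int hφLip.continuous hφsupp).comp_sub_right y').integrableOn]
    rw [← Real.norm_eq_abs, mul_assoc, mul_comm ((volume (closedBall x r)).toReal)]
    apply norm_setIntegral_le_of_norm_le_const_ae' measure_closedBall_lt_top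
    filter_upwards with z _
    have h1 := hφLip.dist_le_mul (z - y) (z - y')
    rw [Real.dist_eq] at h1
    refine le_trans h1 ?_
    gcongr
    rw [dist_eq_norm, dist_eq_norm]
    have : z - y - (z - y') = -(y - y') := by abel
    rw [this, norm_neg]
  exact (LipschitzWith.of_dist_le_mul
    (K := ⟨_, mul_nonneg ENNReal.toReal_nonneg Lφ.2⟩) key).continuous

lemma pow_diff_le {r r' M : ℝ} (h0 : 0 ≤ r') (h1 : r' ≤ r) (h2 : r ≤ M) (n : ℕ) :
    r ^ n - r' ^ n ≤ (n : ℝ) * M ^ (n - 1) * (r - r') := by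
  have hM : 0 ≤ M := le_trans (le_trans h0 h1) h2
  rw [← geom_sum₂_mul r r' n]
  have hsum : (∑ i ∈ Finset.range n, r ^ i * r' ^ (n - 1 - i)) ≤ (n : ℝ) * M ^ (n - 1) := by
    calc (∑ i ∈ Finset.range n, r ^ i * r' ^ (n - 1 - i))
        ≤ ∑ _i ∈ Finset.range n, M ^ (n - 1) := by
          apply Finset.sum_le_sum
          intro i hi
          rw [Finset.mem_range] at hi
          calc r ^ i * r' ^ (n - 1 - i) ≤ M ^ i * M ^ (n - 1 - i) := by
                apply mul_le_mul (pow_le_pow_left₀ (le_trans h0 h1) h2 i)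
                  (pow_le_pow_left₀ h0 (le_trans h1 h2) _)
                  (pow_nonneg h0 _) (pow_nonneg hM _)
            _ = M ^ (n - 1) := by
                rw [← pow_add]; congr 1; omega
      _ = (n : ℝ) * M ^ (n - 1) := by
          rw [Finset.sum_const, Finset.card_range, nsmul_eq_mul]
  exact mul_le_mul_of_nonneg_right hsum (sub_nonneg.2 h1)

lemma vol_cb_toReal (x : E) {r : ℝ} (hr : 0 ≤ r) :
    (volume (closedBall x r)).toReal = r ^ d * (volume (ball (0:E) 1)).toReal := by
  rw [Measure.addHaar_closedBall (μ := volume) x hr, ENNReal.toReal_mul,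
    ENNReal.toReal_ofReal (pow_nonneg hr _), finrank_euclideanSpace_fin]

lemma lipr {σ Cφ : ℝ} {φ : E → ℝ} (hφc : Continuous φ)
    (hφsupp : Function.support φ ⊆ ball 0 σ) (hCφ : ∀ z, |φ z| ≤ Cφ)
    (x y : E) {r r' : ℝ} (h0 : 0 ≤ r') (h1 : r' ≤ r) :
    |(∫ z in closedBall x r, φ (z - y)) - ∫ z in closedBall x r', φ (z - y)|
      ≤ Cφ * ((r ^ d - r' ^ d) * (volume (ball (0:E) 1)).toReal) := by
  have hsub : closedBall x r' ⊆ closedBall x r := closedBall_subset_closedBall h1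
  rw [← integral_diff measurableSet_closedBall
    ((phi_int hφc hφsupp).comp_sub_right y).integrableOn hsub]
  rw [← Real.norm_eq_abs]
  have hlt : volume (closedBall x r \ closedBall x r') < ⊤ :=
    lt_of_le_of_lt (measure_mono Set.diff_subset) measure_closedBall_lt_top
  refine le_trans (norm_setIntegral_le_of_norm_le_const_ae' hlt
    (Filter.Eventually.of_forall (fun z _ => hCφ _))) ?_
  gcongr
  · exact le_trans (abs_nonneg _) (hCφ 0)
  rw [Measure.real, measure_diff hsub measurableSet_closedBall.nullMeasurableSet
    measure_closedBall_lt_top.ne,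
    ENNReal.toReal_sub_of_le (measure_mono hsub) measure_closedBall_lt_top.ne,
    vol_cb_toReal x (le_trans h0 h1), vol_cb_toReal x h0, ← sub_mul]

lemma adiff {σ Cφ : ℝ} {φ : E → ℝ} {Lφ : ℝ≥0} (hφLip : LipschitzWith Lφ φ)
    (hφsupp : Function.support φ ⊆ ball 0 σ) (hCφ : ∀ z, |φ z| ≤ Cφ)
    (x x' y : E) {r r' Rm : ℝ} (hr0 : 0 ≤ r) (hr'0 : 0 ≤ r')
    (hrM : r ≤ Rm) (hr'M : r' ≤ Rm) (hrr' : |r - r'| ≤ ‖x - x'‖) :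
    |(∫ z in closedBall x r, φ (z - y)) - ∫ z in closedBall x' r', φ (z - y)|
      ≤ ((volume (closedBall (0:E) Rm)).toReal * (Lφ : ℝ)
          + Cφ * ((d : ℝ) * Rm ^ (d - 1) * (volume (ball (0:E) 1)).toReal)) * ‖x - x'‖ := by
  have hCφ0 : 0 ≤ Cφ := le_trans (abs_nonneg _) (hCφ 0)
  have hRm0 : 0 ≤ Rm := le_trans hr0 hrM
  have h1 : |(∫ z in closedBall x r, φ (z - y)) - ∫ z in closedBall x' r, φ (z - y)|
      ≤ (volume (closedBall (0:E) Rm)).toReal * ((Lφ : ℝ) * ‖x - x'‖) := by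
    refine le_trans (lipx hφLip hφsupp x x' y r) ?_
    have hmono : (volume (closedBall (0:E) r)).toReal ≤ (volume (closedBall (0:E) Rm)).toReal :=
      ENNReal.toReal_mono measure_closedBall_lt_top.ne
        (measure_mono (closedBall_subset_closedBall hrM))
    exact mul_le_mul_of_nonneg_right hmono (by positivity)
  have h2 : |(∫ z in closedBall x' r, φ (z - y)) - ∫ z in closedBall x' r', φ (z - y)|
      ≤ Cφ * ((d : ℝ) * Rm ^ (d - 1) * (volume (ball (0:E) 1)).toReal) * ‖x - x'‖ := by
    rcases le_total r' r with h | h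
    · refine le_trans (lipr hφLip.continuous hφsupp hCφ x' y hr'0 h) ?_
      have hp := pow_diff_le hr'0 h hrM d
      have habs : r - r' ≤ ‖x - x'‖ := le_trans (le_abs_self _) hrr'
      calc Cφ * ((r ^ d - r' ^ d) * (volume (ball (0:E) 1)).toReal)
          ≤ Cφ * (((d : ℝ) * Rm ^ (d - 1) * (r - r')) * (volume (ball (0:E) 1)).toReal) := by
            gcongr
        _ = Cφ * ((d : ℝ) * Rm ^ (d - 1) * (volume (ball (0:E) 1)).toReal) * (r - r') := by ring
        _ ≤ Cφ * ((d : ℝ) * Rm ^ (d - 1) * (volume (ball (0:E) 1)).toReal) * ‖x - x'‖ :=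
            mul_le_mul_of_nonneg_left habs (by positivity)
    · rw [abs_sub_comm]
      refine le_trans (lipr hφLip.continuous hφsupp hCφ x' y hr0 h) ?_
      have hp := pow_diff_le hr0 h hr'M d
      have habs : r' - r ≤ ‖x - x'‖ := le_trans (le_abs_self _) (by rw [abs_sub_comm]; exact hrr')
      calc Cφ * ((r' ^ d - r ^ d) * (volume (ball (0:E) 1)).toReal)
          ≤ Cφ * (((d : ℝ) * Rm ^ (d - 1) * (r' - r)) * (volume (ball (0:E) 1)).toReal) := by
            gcongr
        _ = Cφ * ((d : ℝ) * Rm ^ (d - 1) * (volume (ball (0:E) 1)).toReal) * (r' - r) := by ring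
        _ ≤ Cφ * ((d : ℝ) * Rm ^ (d - 1) * (volume (ball (0:E) 1)).toReal) * ‖x - x'‖ :=
            mul_le_mul_of_nonneg_left habs (by positivity)
  calc |(∫ z in closedBall x r, φ (z - y)) - ∫ z in closedBall x' r', φ (z - y)|
      ≤ |(∫ z in closedBall x r, φ (z - y)) - ∫ z in closedBall x' r, φ (z - y)|
        + |(∫ z in closedBall x' r, φ (z - y)) - ∫ z in closedBall x' r', φ (z - y)| :=
        abs_sub_le _ _ _
    _ ≤ (volume (closedBall (0:E) Rm)).toReal * ((Lφ : ℝ) * ‖x - x'‖)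
        + Cφ * ((d : ℝ) * Rm ^ (d - 1) * (volume (ball (0:E) 1)).toReal) * ‖x - x'‖ :=
        add_le_add h1 h2
    _ = ((volume (closedBall (0:E) Rm)).toReal * (Lφ : ℝ)
          + Cφ * ((d : ℝ) * Rm ^ (d - 1) * (volume (ball (0:E) 1)).toReal)) * ‖x - x'‖ := by
        ring

end Helpers

set_option maxHeartbeats 1000000 in
/-- the force `F[f]` is globally Lipschitz in `(x,v)` on the
support of `f`, with a constant depending only on `φ, η, d, D_x, D_v`. -/
theorem stmt_5 {d : ℕ} (σ η Dx Dv : ℝ) (hσ : 0 < σ)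
    (hη0 : 0 < η) (hη1 : η < 1)
    (φ : EuclideanSpace ℝ (Fin d) → ℝ) (Lφ : ℝ≥0)
    (hφnonneg : ∀ z, 0 ≤ φ z)
    (hφLip : LipschitzWith Lφ φ)
    (hφsupp : Function.support φ ⊆ ball 0 σ)
    (hφint : ∫ z, φ z = 1) :
    ∃ c₀ : ℝ, 0 ≤ c₀ ∧
      ∀ (f : Measure (EuclideanSpace ℝ (Fin d) × EuclideanSpace ℝ (Fin d))),
        IsProbabilityMeasure f →
        ∀ (Sx Sv : Set (EuclideanSpace ℝ (Fin d))),
          IsCompact Sx → IsCompact Sv → f (Sx ×ˢ Sv)ᶜ = 0 →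
          Metric.diam Sx = Dx → Metric.diam Sv = Dv →
          ∀ x v x' v', (x, v) ∈ Sx ×ˢ Sv → (x', v') ∈ Sx ×ˢ Sv →
            ‖Force η φ f x v - Force η φ f x' v'‖ ≤
              c₀ * (‖x - x'‖ + ‖v - v'‖) := by
  classical
  obtain ⟨C₀, hC₀⟩ := hφLip.continuous.bounded_above_of_compact_support (phi_hcs hφsupp)
  set Cφ : ℝ := max C₀ 0 with hCφdef
  have hCφ : ∀ z, |φ z| ≤ Cφ := fun z => by
    refine le_trans ?_ (le_max_left _ _)
    rw [← Real.norm_eq_abs]; exact hC₀ z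
  have hCφ0 : (0:ℝ) ≤ Cφ := le_max_right _ _
  set Rm : ℝ := max Dx 0 + σ with hRmdef
  have hRm0 : (0:ℝ) < Rm := by positivity
  set Vb : ℝ := (volume (ball (0:EuclideanSpace ℝ (Fin d)) 1)).toReal with hVbdef
  have hVb0 : (0:ℝ) ≤ Vb := ENNReal.toReal_nonneg
  set V : ℝ := (volume (closedBall (0:EuclideanSpace ℝ (Fin d)) Rm)).toReal with hVdef
  have hV0 : (0:ℝ) ≤ V := ENNReal.toReal_nonneg
  have hVeq : V = Rm ^ d * Vb := vol_cb_toReal _ hRm0.le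
  set K : ℝ := V * (Lφ : ℝ) + Cφ * ((d : ℝ) * Rm ^ (d - 1) * Vb) with hKdef
  have hK0 : (0:ℝ) ≤ K := by
    apply add_nonneg (mul_nonneg hV0 Lφ.2)
    apply mul_nonneg hCφ0
    exact mul_nonneg (mul_nonneg (Nat.cast_nonneg d) (pow_nonneg hRm0.le _)) hVb0
  refine ⟨(1 / η) * (K * max Dv 0 + Cφ * V), ?_, ?_⟩
  · apply mul_nonneg (by positivity)
    exact add_nonneg (mul_nonneg hK0 (le_max_right _ _)) (mul_nonneg hCφ0 hV0)
  intro f hf Sx Sv hSx hSv hsupp hDx hDv x v x' v' hxv hx'v'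
  obtain ⟨hx, hv⟩ := hxv
  obtain ⟨hx', hv'⟩ := hx'v'
  have hDx0 : (0:ℝ) ≤ Dx := hDx ▸ diam_nonneg
  have hDv0 : (0:ℝ) ≤ Dv := hDv ▸ diam_nonneg
  have hae : ∀ᵐ yw ∂f, yw ∈ Sx ×ˢ Sv := by
    rw [MeasureTheory.ae_iff]
    exact hsupp
  set R : EuclideanSpace ℝ (Fin d) → ℝ := Rrad η φ f with hRdef
  have hR0 : ∀ z, 0 ≤ R z := fun z => Real.sInf_nonneg (fun r hr => hr.1.le)
  -- full inner integral equals 1 for large radii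
  have hfull : ∀ xx ∈ Sx, ∀ y ∈ Sx, ∀ r : ℝ, Dx + σ ≤ r →
      ∫ z in closedBall xx r, φ (z - y) = 1 := by
    intro xx hxx y hy r hr
    have hzero : ∀ z, z ∉ closedBall xx r → φ (z - y) = 0 := by
      intro z hz
      by_contra h
      have h1 : z - y ∈ ball (0:EuclideanSpace ℝ (Fin d)) σ := hφsupp (by simpa [Function.mem_support] using h)
      rw [mem_ball, dist_zero_right] at h1
      apply hz
      rw [mem_closedBall]
      have h2 : dist y xx ≤ Dx := hDx ▸ dist_le_diam_of_mem hSx.isBounded hy hxx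
      have h3 : dist z y < σ := by rwa [dist_eq_norm]
      calc dist z xx ≤ dist z y + dist y xx := dist_triangle _ _ _
        _ ≤ σ + Dx := by linarith
        _ ≤ r := by linarith
    rw [setIntegral_eq_integral_of_forall_compl_eq_zero hzero,
      integral_sub_right_eq_self φ y]
    exact hφint
  have hG1 : ∀ xx ∈ Sx,
      ∫ yw, (∫ z in closedBall xx (Dx + σ), φ (z - yw.1)) ∂f = 1 := by
    intro xx hxx
    have h : ∀ᵐ yw ∂f,
        (∫ z in closedBall xx (Dx + σ), φ (z - yw.1)) = (fun _ => (1:ℝ)) yw := by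
      filter_upwards [hae] with yw hyw
      exact hfull xx hxx yw.1 hyw.1 _ le_rfl
    rw [integral_congr_ae h]
    simp
  have hbdd : ∀ xx : EuclideanSpace ℝ (Fin d), BddBelow
      {r : ℝ | 0 < r ∧ η ≤ ∫ yw, (∫ z in closedBall xx r, φ (z - yw.1)) ∂f} :=
    fun xx => ⟨0, fun r hr => hr.1.le⟩
  have hmem : ∀ xx ∈ Sx, (Dx + σ) ∈
      {r : ℝ | 0 < r ∧ η ≤ ∫ yw, (∫ z in closedBall xx r, φ (z - yw.1)) ∂f} := by
    intro xx hxx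
    exact ⟨by linarith, by rw [hG1 xx hxx]; linarith⟩
  have hRub : ∀ xx ∈ Sx, R xx ≤ Dx + σ := fun xx hxx => csInf_le (hbdd xx) (hmem xx hxx)
  -- integrability of the inner-integral function wrt f
  have hIntA : ∀ (c : EuclideanSpace ℝ (Fin d)) (r : ℝ),
      Integrable (fun yw : EuclideanSpace ℝ (Fin d) × EuclideanSpace ℝ (Fin d) =>
        ∫ z in closedBall c r, φ (z - yw.1)) f := by
    intro c r
    refine Integrable.mono' (integrable_const (Cφ * (volume (closedBall c r)).toReal))
      (((lipy hφLip hφsupp c r).comp continuous_fst).aestronglyMeasurable) ?_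
    filter_upwards with yw
    rw [Real.norm_eq_abs]
    exact bound_a hCφ c yw.1 r
  -- monotonicity in (center, radius)
  have hmono : ∀ (c c' : EuclideanSpace ℝ (Fin d)) (r δ' : ℝ), dist c' c ≤ δ' →
      (∫ yw, (∫ z in closedBall c' r, φ (z - yw.1)) ∂f)
        ≤ ∫ yw, (∫ z in closedBall c (r + δ'), φ (z - yw.1)) ∂f := by
    intro c c' r δ' hdist
    apply integral_mono_of_nonneg
    · filter_upwards with yw
      exact setIntegral_nonneg measurableSet_closedBall (fun z _ => hφnonneg _)
    · exact hIntA c (r + δ')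
    · filter_upwards with yw
      refine setIntegral_mono_set
        ((phi_int hφLip.continuous hφsupp).comp_sub_right yw.1).integrableOn
        (Filter.Eventually.of_forall fun z => hφnonneg _)
        (HasSubset.Subset.eventuallyLE (closedBall_subset_closedBall' (by linarith)))
  -- Lipschitz property of R on Sx
  have hRlip : ∀ xx ∈ Sx, ∀ xx' ∈ Sx, R xx ≤ R xx' + ‖xx - xx'‖ := by
    intro xx hxx xx' hxx'
    have h2 : R xx - ‖xx - xx'‖ ≤ R xx' := by
      apply le_csInf ⟨_, hmem xx' hxx'⟩
      intro r hr
      have h1 : R xx ≤ r + ‖xx - xx'‖ := by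
        apply csInf_le (hbdd xx)
        refine ⟨by have := norm_nonneg (xx - xx'); linarith [hr.1], ?_⟩
        refine le_trans hr.2 (hmono xx xx' r ‖xx - xx'‖ ?_)
        rw [dist_eq_norm, norm_sub_rev]
      linarith
    linarith
  set δ : ℝ := ‖x - x'‖ with hδdef
  have hδ0 : 0 ≤ δ := norm_nonneg _
  have hRd : |R x - R x'| ≤ δ := by
    rw [abs_sub_le_iff]
    constructor
    · linarith [hRlip x hx x' hx']
    · have := hRlip x' hx' x hx
      rw [norm_sub_rev] at this
      linarith
  have hRmx : R x ≤ Rm := le_trans (hRub x hx) (by rw [hRmdef]; gcongr; exact le_max_left _ _)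
  have hRmx' : R x' ≤ Rm := le_trans (hRub x' hx') (by rw [hRmdef]; gcongr; exact le_max_left _ _)
  -- key difference bound
  have hAdiff : ∀ y, |(∫ z in closedBall x (R x), φ (z - y))
      - ∫ z in closedBall x' (R x'), φ (z - y)| ≤ K * δ := by
    intro y
    have := adiff hφLip hφsupp hCφ x x' y (hR0 x) (hR0 x') hRmx hRmx' hRd
    rw [hKdef, hVdef, hVbdef]
    exact this
  -- uniform bound on inner integrals
  have hAbound : ∀ (c : EuclideanSpace ℝ (Fin d)), R c ≤ Rm → ∀ y,
      |∫ z in closedBall c (R c), φ (z - y)| ≤ Cφ * V := by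
    intro c hc y
    refine le_trans (bound_a hCφ c y (R c)) ?_
    rw [hVeq]
    rw [vol_cb_toReal c (hR0 c)]
    have : (R c) ^ d ≤ Rm ^ d := pow_le_pow_left₀ (hR0 c) hc d
    calc Cφ * ((R c) ^ d * Vb) ≤ Cφ * (Rm ^ d * Vb) := by gcongr
      _ = Cφ * (Rm ^ d * Vb) := rfl
  -- bound on velocities in Sv
  obtain ⟨Mv, hMv⟩ := isBounded_iff_forall_norm_le.1 hSv.isBounded
  -- integrability of the force integrand
  have hIntF : ∀ (c u : EuclideanSpace ℝ (Fin d)),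
      Integrable (fun yw : EuclideanSpace ℝ (Fin d) × EuclideanSpace ℝ (Fin d) =>
        (∫ z in closedBall c (R c), φ (z - yw.1)) • (u - yw.2)) f := by
    intro c u
    have hcont : Continuous (fun yw : EuclideanSpace ℝ (Fin d) × EuclideanSpace ℝ (Fin d) =>
        (∫ z in closedBall c (R c), φ (z - yw.1)) • (u - yw.2)) :=
      ((lipy hφLip hφsupp c (R c)).comp continuous_fst).smul
        (continuous_const.sub continuous_snd)
    refine Integrable.mono'
      (integrable_const ((Cφ * (volume (closedBall c (R c))).toReal) * (‖u‖ + Mv)))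
      hcont.aestronglyMeasurable ?_
    filter_upwards [hae] with yw hyw
    rw [norm_smul, Real.norm_eq_abs]
    apply mul_le_mul (bound_a hCφ c yw.1 (R c))
    · calc ‖u - yw.2‖ ≤ ‖u‖ + ‖yw.2‖ := norm_sub_le _ _
        _ ≤ ‖u‖ + Mv := by linarith [hMv yw.2 hyw.2]
    · exact norm_nonneg _
    · exact mul_nonneg hCφ0 ENNReal.toReal_nonneg
  -- the two force-difference pieces
  have hvw : ∀ᵐ yw ∂f, ‖v - yw.2‖ ≤ Dv := by
    filter_upwards [hae] with yw hyw
    rw [← dist_eq_norm]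
    exact hDv ▸ dist_le_diam_of_mem hSv.isBounded hv hyw.2
  have hB1 : ‖(∫ yw, (∫ z in closedBall x (R x), φ (z - yw.1)) • (v - yw.2) ∂f)
      - ∫ yw, (∫ z in closedBall x' (R x'), φ (z - yw.1)) • (v - yw.2) ∂f‖
        ≤ K * δ * Dv := by
    rw [← integral_sub (hIntF x v) (hIntF x' v)]
    have heq : (fun yw : EuclideanSpace ℝ (Fin d) × EuclideanSpace ℝ (Fin d) =>
        (∫ z in closedBall x (R x), φ (z - yw.1)) • (v - yw.2)
          - (∫ z in closedBall x' (R x'), φ (z - yw.1)) • (v - yw.2))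
        = fun yw => ((∫ z in closedBall x (R x), φ (z - yw.1))
          - ∫ z in closedBall x' (R x'), φ (z - yw.1)) • (v - yw.2) := by
      funext yw; rw [sub_smul]
    rw [heq]
    have hb : ∀ᵐ yw ∂f, ‖((∫ z in closedBall x (R x), φ (z - yw.1))
        - ∫ z in closedBall x' (R x'), φ (z - yw.1)) • (v - yw.2)‖ ≤ K * δ * Dv := by
      filter_upwards [hvw] with yw h1
      rw [norm_smul, Real.norm_eq_abs]
      exact mul_le_mul (hAdiff yw.1) h1 (norm_nonneg _) (mul_nonneg hK0 hδ0)
    have := norm_integral_le_of_norm_le_const hb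
    simpa [measure_univ] using this
  have hB2 : ‖(∫ yw, (∫ z in closedBall x' (R x'), φ (z - yw.1)) • (v - yw.2) ∂f)
      - ∫ yw, (∫ z in closedBall x' (R x'), φ (z - yw.1)) • (v' - yw.2) ∂f‖
        ≤ (Cφ * V) * ‖v - v'‖ := by
    rw [← integral_sub (hIntF x' v) (hIntF x' v')]
    have heq : (fun yw : EuclideanSpace ℝ (Fin d) × EuclideanSpace ℝ (Fin d) =>
        (∫ z in closedBall x' (R x'), φ (z - yw.1)) • (v - yw.2)
          - (∫ z in closedBall x' (R x'), φ (z - yw.1)) • (v' - yw.2))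
        = fun yw => (∫ z in closedBall x' (R x'), φ (z - yw.1)) • (v - v') := by
      funext yw
      rw [← smul_sub]
      congr 1
      abel
    rw [heq]
    have hb : ∀ᵐ yw ∂f, ‖(∫ z in closedBall x' (R x'), φ (z - yw.1)) • (v - v')‖
        ≤ (Cφ * V) * ‖v - v'‖ := by
      filter_upwards with yw
      rw [norm_smul, Real.norm_eq_abs]
      exact mul_le_mul (hAbound x' hRmx' yw.1) le_rfl (norm_nonneg _)
        (mul_nonneg hCφ0 hV0)
    have := norm_integral_le_of_norm_le_const hb
    simpa [measure_univ] using this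
  -- assemble
  have hforce : Force η φ f x v - Force η φ f x' v'
      = (1 / η) • ((∫ yw, (∫ z in closedBall x (R x), φ (z - yw.1)) • (v - yw.2) ∂f)
        - ∫ yw, (∫ z in closedBall x' (R x'), φ (z - yw.1)) • (v' - yw.2) ∂f) := by
    rw [Force, Force, smul_sub]
  rw [hforce, norm_smul]
  have hnorm : ‖(∫ yw, (∫ z in closedBall x (R x), φ (z - yw.1)) • (v - yw.2) ∂f)
      - ∫ yw, (∫ z in closedBall x' (R x'), φ (z - yw.1)) • (v' - yw.2) ∂f‖
        ≤ K * δ * Dv + (Cφ * V) * ‖v - v'‖ := by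
    have htri := norm_sub_le_norm_sub_add_norm_sub
      (∫ yw, (∫ z in closedBall x (R x), φ (z - yw.1)) • (v - yw.2) ∂f)
      (∫ yw, (∫ z in closedBall x' (R x'), φ (z - yw.1)) • (v - yw.2) ∂f)
      (∫ yw, (∫ z in closedBall x' (R x'), φ (z - yw.1)) • (v' - yw.2) ∂f)
    linarith [hB1, hB2]
  have h1η : ‖(1:ℝ) / η‖ = 1 / η := by
    rw [Real.norm_eq_abs, abs_of_pos (by positivity)]
  rw [h1η]
  have hvv'0 : (0:ℝ) ≤ ‖v - v'‖ := norm_nonneg _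
  have hfinal : K * δ * Dv + (Cφ * V) * ‖v - v'‖
      ≤ (K * max Dv 0 + Cφ * V) * (δ + ‖v - v'‖) := by
    have h1 : K * δ * Dv ≤ K * max Dv 0 * δ := by
      have h0 : Dv ≤ max Dv 0 := le_max_left _ _
      nlinarith [mul_nonneg (mul_nonneg hK0 hδ0) (sub_nonneg.2 h0)]
    have h2 : (Cφ * V) * ‖v - v'‖ ≤ (Cφ * V) * ‖v - v'‖ := le_rfl
    have h3 : (0:ℝ) ≤ K * max Dv 0 := mul_nonneg hK0 (le_max_right _ _)
    have h4 : (0:ℝ) ≤ Cφ * V := mul_nonneg hCφ0 hV0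
    nlinarith [mul_nonneg h3 hvv'0, mul_nonneg h4 hδ0, h1]
  calc (1 / η) * ‖(∫ yw, (∫ z in closedBall x (R x), φ (z - yw.1)) • (v - yw.2) ∂f)
      - ∫ yw, (∫ z in closedBall x' (R x'), φ (z - yw.1)) • (v' - yw.2) ∂f‖
      ≤ (1 / η) * (K * δ * Dv + (Cφ * V) * ‖v - v'‖) := by
        apply mul_le_mul_of_nonneg_left hnorm (by positivity)
    _ ≤ (1 / η) * ((K * max Dv 0 + Cφ * V) * (δ + ‖v - v'‖)) := by
        apply mul_le_mul_of_nonneg_left hfinal (by positivity)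
    _ = (1 / η) * (K * max Dv 0 + Cφ * V) * (‖x - x'‖ + ‖v - v'‖) := by
        rw [hδdef]; ring
end

section
/- Let f and f̃ be compactly supported probability measures on ℝ^{2d} with supports of spatial diameter at most D_x and velocity diameter at most D_v. Then for all (x,v), |F[f](x,v) − F[f̃](x,v)| ≤ c₁ W₂(f, f̃), where c₁ depends on φ, η, d, D_x, D_v, and W₂ is the 2-Wasserstein distance. -/
open MeasureTheory Metric NNReal

/-- The 2-Wasserstein distance, defined via couplings. -/
noncomputable def W2 {α : Type*} [MeasurableSpace α] [PseudoMetricSpace α]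
    (μ ν : Measure α) : ℝ :=
  sInf {c : ℝ | ∃ γ : Measure (α × α), IsProbabilityMeasure γ ∧
    γ.map Prod.fst = μ ∧ γ.map Prod.snd = ν ∧
    c = (∫ p, dist p.1 p.2 ^ 2 ∂γ) ^ ((1 : ℝ) / 2)}

open Filter



/-- Euclidean space abbreviation. -/
abbrev Euc (d : ℕ) := EuclideanSpace ℝ (Fin d)

section Aux

variable {d : ℕ}

/-- kernel mass of a ball -/
noncomputable def aker (φ : Euc d → ℝ) (x : Euc d) (r : ℝ) (y : Euc d) : ℝ :=
  ∫ z in closedBall x r, φ (z - y)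

/-- total fuzzy mass -/
noncomputable def Fm (φ : Euc d → ℝ) (μ : Measure (Euc d × Euc d)) (x : Euc d) (r : ℝ) : ℝ :=
  ∫ yw, aker φ x r yw.1 ∂μ

variable {σ : ℝ} {φ : Euc d → ℝ} {Lφ : ℝ≥0}

lemma phi_integrable (hφLip : LipschitzWith Lφ φ) (hφsupp : Function.support φ ⊆ ball 0 σ) :
    Integrable φ (volume : Measure (Euc d)) := by
  refine hφLip.continuous.integrable_of_hasCompactSupport
    (HasCompactSupport.intro (isCompact_closedBall (0 : Euc d) σ) ?_)
  intro z hz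
  by_contra h
  exact hz (ball_subset_closedBall (hφsupp h))

lemma aker_nonneg (hφnonneg : ∀ z, 0 ≤ φ z) (x : Euc d) (r : ℝ) (y : Euc d) :
    0 ≤ aker φ x r y :=
  setIntegral_nonneg measurableSet_closedBall fun z _ => hφnonneg _

lemma aker_le_one (hφnonneg : ∀ z, 0 ≤ φ z) (hφLip : LipschitzWith Lφ φ)
    (hφsupp : Function.support φ ⊆ ball 0 σ) (hφint : ∫ z, φ z = 1)
    (x : Euc d) (r : ℝ) (y : Euc d) : aker φ x r y ≤ 1 := by
  have h1 : ∫ z, φ (z - y) = 1 := by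
    rw [integral_sub_right_eq_self (fun z => φ z) y]; exact hφint
  calc aker φ x r y ≤ ∫ z, φ (z - y) :=
        setIntegral_le_integral ((phi_integrable hφLip hφsupp).comp_sub_right y)
          (Filter.Eventually.of_forall fun z => hφnonneg _)
    _ = 1 := h1

lemma aker_mono (hφnonneg : ∀ z, 0 ≤ φ z) (hφLip : LipschitzWith Lφ φ)
    (hφsupp : Function.support φ ⊆ ball 0 σ) (x : Euc d) {r r' : ℝ} (h : r ≤ r') (y : Euc d) :
    aker φ x r y ≤ aker φ x r' y :=
  setIntegral_mono_set
    ((phi_integrable hφLip hφsupp).comp_sub_right y).integrableOn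
    (Filter.Eventually.of_forall fun z => hφnonneg _)
    (HasSubset.Subset.eventuallyLE (closedBall_subset_closedBall h))

end Aux

section Aux2
variable {d : ℕ} {σ : ℝ} {φ : Euc d → ℝ} {Lφ : ℝ≥0}

/-- crucial: `r`-independent Lipschitz bound for `aker` in `y`. -/
lemma aker_lip (hφLip : LipschitzWith Lφ φ) (hφsupp : Function.support φ ⊆ ball 0 σ)
    (x : Euc d) (r : ℝ) (y y' : Euc d) :
    |aker φ x r y - aker φ x r y'| ≤
      (2 * Lφ * (volume (ball (0 : Euc d) σ)).toReal) * dist y y' := by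
  set U : Set (Euc d) := ball y σ ∪ ball y' σ with hU
  have hUmeas : MeasurableSet U := (isOpen_ball.union isOpen_ball).measurableSet
  have hUvol : volume U ≠ ⊤ :=
    ((measure_union_le _ _).trans_lt (by
      rw [ENNReal.add_lt_top]; exact ⟨measure_ball_lt_top, measure_ball_lt_top⟩)).ne
  have hint : ∀ y₀ : Euc d, IntegrableOn (fun z => φ (z - y₀)) (closedBall x r) volume :=
    fun y₀ => ((phi_integrable hφLip hφsupp).comp_sub_right y₀).integrableOn
  have key : ∀ z, |φ (z - y) - φ (z - y')| ≤ U.indicator (fun _ => (Lφ : ℝ) * dist y y') z := by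
    intro z
    by_cases hz : z ∈ U
    · rw [Set.indicator_of_mem hz]
      calc |φ (z - y) - φ (z - y')| = dist (φ (z - y)) (φ (z - y')) := (Real.dist_eq _ _).symm
        _ ≤ (Lφ : ℝ) * dist (z - y) (z - y') := hφLip.dist_le_mul _ _
        _ = (Lφ : ℝ) * dist y y' := by rw [dist_sub_left]
    · rw [Set.indicator_of_notMem hz]
      have h1 : φ (z - y) = 0 := by
        by_contra h
        exact hz (Or.inl (by simpa [mem_ball, dist_eq_norm] using hφsupp h))
      have h2 : φ (z - y') = 0 := by
        by_contra h
        exact hz (Or.inr (by simpa [mem_ball, dist_eq_norm] using hφsupp h))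
      simp [h1, h2]
  have hindint : Integrable (U.indicator (fun _ => (Lφ : ℝ) * dist y y')) volume := by
    refine (integrable_indicator_iff hUmeas).mpr ?_
    exact integrableOn_const hUvol
  have habs : |∫ z in closedBall x r, (φ (z - y) - φ (z - y'))| ≤
      ∫ z in closedBall x r, |φ (z - y) - φ (z - y')| := by
    simpa [Real.norm_eq_abs] using
      norm_integral_le_integral_norm (μ := volume.restrict (closedBall x r))
        (fun z => φ (z - y) - φ (z - y'))
  calc |aker φ x r y - aker φ x r y'|
      = |∫ z in closedBall x r, (φ (z - y) - φ (z - y'))| := by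
        rw [integral_sub (hint y) (hint y')]; rfl
    _ ≤ ∫ z in closedBall x r, |φ (z - y) - φ (z - y')| := habs
    _ ≤ ∫ z in closedBall x r, U.indicator (fun _ => (Lφ : ℝ) * dist y y') z :=
        setIntegral_mono_on ((hint y).sub (hint y')).abs hindint.integrableOn
          measurableSet_closedBall (fun z _ => key z)
    _ ≤ ∫ z, U.indicator (fun _ => (Lφ : ℝ) * dist y y') z :=
        setIntegral_le_integral hindint (Filter.Eventually.of_forall fun z =>
          Set.indicator_nonneg (fun _ _ => mul_nonneg Lφ.2 dist_nonneg) z)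
    _ = (volume U).toReal * ((Lφ : ℝ) * dist y y') := by
        rw [integral_indicator_const _ hUmeas]; simp [smul_eq_mul, Measure.real]
    _ ≤ (2 * (volume (ball (0 : Euc d) σ)).toReal) * ((Lφ : ℝ) * dist y y') := by
        refine mul_le_mul_of_nonneg_right ?_ (mul_nonneg Lφ.2 dist_nonneg)
        have hle : volume U ≤ volume (ball y σ) + volume (ball y' σ) := measure_union_le _ _
        have hb : ∀ w : Euc d, volume (ball w σ) = volume (ball (0 : Euc d) σ) := fun w =>
          Measure.addHaar_ball_center volume w σ
        calc (volume U).toReal ≤ (volume (ball y σ) + volume (ball y' σ)).toReal := by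
              refine ENNReal.toReal_mono ?_ hle
              rw [hb y, hb y']
              exact ENNReal.add_ne_top.mpr ⟨measure_ball_lt_top.ne, measure_ball_lt_top.ne⟩
            _ = 2 * (volume (ball (0 : Euc d) σ)).toReal := by
              rw [ENNReal.toReal_add (by rw [hb]; exact measure_ball_lt_top.ne)
                (by rw [hb]; exact measure_ball_lt_top.ne), hb y, hb y']
              ring
    _ = (2 * Lφ * (volume (ball (0 : Euc d) σ)).toReal) * dist y y' := by ring

/-- continuity of `aker` in `y`. -/
lemma aker_cont (hφLip : LipschitzWith Lφ φ) (hφsupp : Function.support φ ⊆ ball 0 σ)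
    (x : Euc d) (r : ℝ) : Continuous (fun y => aker φ x r y) := by
  set La : ℝ := 2 * Lφ * (volume (ball (0 : Euc d) σ)).toReal with hLa
  have hLa0 : 0 ≤ La := by
    apply mul_nonneg (by positivity) ENNReal.toReal_nonneg
  have : LipschitzWith ⟨La, hLa0⟩ (fun y => aker φ x r y) := by
    refine LipschitzWith.of_dist_le_mul fun y y' => ?_
    rw [Real.dist_eq]
    exact aker_lip hφLip hφsupp x r y y'
  exact this.continuous

end Aux2
section Aux3
variable {d : ℕ} {σ : ℝ} {φ : Euc d → ℝ} {Lφ : ℝ≥0}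

lemma integrable_aker_fst (hφnonneg : ∀ z, 0 ≤ φ z) (hφLip : LipschitzWith Lφ φ)
    (hφsupp : Function.support φ ⊆ ball 0 σ) (hφint : ∫ z, φ z = 1)
    (μ : Measure (Euc d × Euc d)) [IsFiniteMeasure μ] (x : Euc d) (r : ℝ) :
    Integrable (fun yw : Euc d × Euc d => aker φ x r yw.1) μ := by
  refine (integrable_const (1 : ℝ)).mono'
    (((aker_cont hφLip hφsupp x r).comp continuous_fst).aestronglyMeasurable) ?_
  filter_upwards with yw
  rw [Real.norm_eq_abs, abs_of_nonneg (aker_nonneg hφnonneg x r yw.1)]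
  exact aker_le_one hφnonneg hφLip hφsupp hφint x r yw.1

lemma Fm_mono (hφnonneg : ∀ z, 0 ≤ φ z) (hφLip : LipschitzWith Lφ φ)
    (hφsupp : Function.support φ ⊆ ball 0 σ) (hφint : ∫ z, φ z = 1)
    (μ : Measure (Euc d × Euc d)) [IsFiniteMeasure μ] (x : Euc d) {r r' : ℝ} (h : r ≤ r') :
    Fm φ μ x r ≤ Fm φ μ x r' :=
  integral_mono (integrable_aker_fst hφnonneg hφLip hφsupp hφint μ x r)
    (integrable_aker_fst hφnonneg hφLip hφsupp hφint μ x r')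
    (fun yw => aker_mono hφnonneg hφLip hφsupp x h yw.1)

/-- sequential continuity of `r ↦ aker φ x r y` (d ≥ 1). -/
lemma aker_tendsto [Nontrivial (Euc d)]
    (hφLip : LipschitzWith Lφ φ) (hφsupp : Function.support φ ⊆ ball 0 σ)
    (x : Euc d) (rs : ℕ → ℝ) (R : ℝ) (hlim : Tendsto rs atTop (nhds R)) (y : Euc d) :
    Tendsto (fun n => aker φ x (rs n) y) atTop (nhds (aker φ x R y)) := by
  have hind : ∀ r : ℝ, aker φ x r y =
      ∫ z, (closedBall x r).indicator (fun z => φ (z - y)) z := by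
    intro r
    rw [integral_indicator measurableSet_closedBall]; rfl
  simp only [hind]
  refine tendsto_integral_of_dominated_convergence (fun z => |φ (z - y)|)
    (fun n => ((hφLip.continuous.comp (continuous_id.sub continuous_const)).stronglyMeasurable.indicator
      measurableSet_closedBall).aestronglyMeasurable)
    ((phi_integrable hφLip hφsupp).comp_sub_right y).abs ?_ ?_
  · intro n
    filter_upwards with z
    rw [Real.norm_eq_abs]
    rcases Set.indicator_eq_zero_or_self (closedBall x (rs n)) (fun z => φ (z - y)) z with h | h
    · rw [h]; simp
    · rw [h]
  · have hsph : ∀ᵐ z : Euc d, dist z x ≠ R := by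
      have h0 : volume (sphere x R) = 0 := Measure.addHaar_sphere volume x R
      rw [ae_iff]
      convert h0 using 2
      ext z
      simp [Metric.mem_sphere, dist_eq_norm]
    filter_upwards [hsph] with z hz
    rcases lt_or_gt_of_ne hz with hlt | hgt
    · have hev : ∀ᶠ n in atTop, dist z x < rs n := hlim.eventually (eventually_gt_nhds hlt)
      have hzR : z ∈ closedBall x R := mem_closedBall.mpr (le_of_lt hlt)
      rw [Set.indicator_of_mem hzR]
      refine Tendsto.congr' ?_ (tendsto_const_nhds (x := φ (z - y)))
      filter_upwards [hev] with n hn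
      rw [Set.indicator_of_mem (mem_closedBall.mpr hn.le)]
    · have hev : ∀ᶠ n in atTop, rs n < dist z x := hlim.eventually (eventually_lt_nhds hgt)
      have hzR : z ∉ closedBall x R := by
        rw [mem_closedBall]; exact not_le.mpr hgt
      rw [Set.indicator_of_notMem hzR]
      refine Tendsto.congr' ?_ (tendsto_const_nhds (x := (0:ℝ)))
      filter_upwards [hev] with n hn
      rw [Set.indicator_of_notMem (by rw [mem_closedBall]; exact not_le.mpr hn)]
end Aux3
section Aux4
variable {d : ℕ} {σ : ℝ} {φ : Euc d → ℝ} {Lφ : ℝ≥0}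

lemma Fm_tendsto [Nontrivial (Euc d)]
    (hφnonneg : ∀ z, 0 ≤ φ z) (hφLip : LipschitzWith Lφ φ)
    (hφsupp : Function.support φ ⊆ ball 0 σ) (hφint : ∫ z, φ z = 1)
    (μ : Measure (Euc d × Euc d)) [IsFiniteMeasure μ] (x : Euc d)
    (rs : ℕ → ℝ) (R : ℝ) (hlim : Tendsto rs atTop (nhds R)) :
    Tendsto (fun n => Fm φ μ x (rs n)) atTop (nhds (Fm φ μ x R)) := by
  refine tendsto_integral_of_dominated_convergence (fun _ => (1 : ℝ))
    (fun n => ((aker_cont hφLip hφsupp x (rs n)).comp continuous_fst).aestronglyMeasurable)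
    (integrable_const 1) ?_ ?_
  · intro n
    filter_upwards with yw
    rw [Real.norm_eq_abs, abs_of_nonneg (aker_nonneg hφnonneg x (rs n) yw.1)]
    exact aker_le_one hφnonneg hφLip hφsupp hφint x (rs n) yw.1
  · filter_upwards with yw
    exact aker_tendsto hφLip hφsupp x rs R hlim yw.1
end Aux4
section Aux5
variable {d : ℕ} {σ η : ℝ} {φ : Euc d → ℝ} {Lφ : ℝ≥0}

lemma Rrad_eq (η : ℝ) (φ : Euc d → ℝ) (μ : Measure (Euc d × Euc d)) (x : Euc d) :
    Rrad η φ μ x = sInf {r : ℝ | 0 < r ∧ η ≤ Fm φ μ x r} := rfl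

lemma ae_mem_of_compl_null (μ : Measure (Euc d × Euc d)) {A : Set (Euc d × Euc d)}
    (h : μ Aᶜ = 0) : ∀ᵐ yw ∂μ, yw ∈ A := by
  rw [ae_iff]
  have heq : {a | ¬ a ∈ A} = Aᶜ := rfl
  rw [heq]; exact h

/-- The mass identity: the fuzzy ball carries mass exactly η. -/
lemma mass_identity [Nontrivial (Euc d)] (hσ : 0 < σ)
    (hη0 : 0 < η) (hη1 : η < 1)
    (hφnonneg : ∀ z, 0 ≤ φ z) (hφLip : LipschitzWith Lφ φ)
    (hφsupp : Function.support φ ⊆ ball 0 σ) (hφint : ∫ z, φ z = 1)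
    (μ : Measure (Euc d × Euc d)) [IsProbabilityMeasure μ]
    {Sx Sv : Set (Euc d)} (hSx : IsCompact Sx) (hSv : IsCompact Sv)
    (hμsupp : μ (Sx ×ˢ Sv)ᶜ = 0) (x : Euc d) :
    Fm φ μ x (Rrad η φ μ x) = η := by
  have hae : ∀ᵐ yw ∂μ, yw ∈ Sx ×ˢ Sv := ae_mem_of_compl_null μ hμsupp
  -- the support is nonempty
  have hne : (Sx ×ˢ Sv).Nonempty := by
    by_contra h
    rw [Set.not_nonempty_iff_eq_empty] at h
    rw [h, Set.compl_empty] at hμsupp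
    simp [measure_univ] at hμsupp
  obtain ⟨yw₀, hyw₀⟩ := hne
  set S : Set ℝ := {r : ℝ | 0 < r ∧ η ≤ Fm φ μ x r} with hS
  have hbdd : BddBelow S := ⟨0, fun r hr => hr.1.le⟩
  -- S is nonempty: far enough balls capture everything
  set rstar : ℝ := dist x yw₀.1 + diam Sx + σ with hrstar
  have hrstar_mem : rstar ∈ S := by
    constructor
    · have : (0:ℝ) ≤ dist x yw₀.1 + diam Sx := by positivity
      linarith
    · have hone : ∀ y ∈ Sx, aker φ x rstar y = 1 := by
        intro y hy
        have hcompl : ∀ z ∉ closedBall x rstar, φ (z - y) = 0 := by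
          intro z hz
          by_contra h
          apply hz
          have h1 : ‖z - y‖ < σ := by
            have := hφsupp h; rwa [mem_ball, dist_eq_norm, sub_zero] at this
          have h2 : dist y yw₀.1 ≤ diam Sx :=
            dist_le_diam_of_mem hSx.isBounded hy hyw₀.1
          rw [mem_closedBall]
          calc dist z x ≤ dist z y + dist y yw₀.1 + dist yw₀.1 x := dist_triangle4 z y yw₀.1 x
            _ ≤ σ + diam Sx + dist x yw₀.1 := by
                rw [dist_comm yw₀.1 x]
                have : dist z y < σ := by rwa [dist_eq_norm]
                linarith
            _ = rstar := by ring
        rw [aker, setIntegral_eq_integral_of_forall_compl_eq_zero hcompl,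
          integral_sub_right_eq_self (fun z => φ z) y, hφint]
      have : Fm φ μ x rstar = 1 := by
        rw [Fm]
        rw [integral_congr_ae (g := fun _ => (1:ℝ)) (by
          filter_upwards [hae] with yw hyw
          exact hone yw.1 hyw.1)]
        simp [measure_univ]
      rw [this]; exact hη1.le
  have hSne : S.Nonempty := ⟨rstar, hrstar_mem⟩
  set R : ℝ := Rrad η φ μ x with hRdef
  have hReq : R = sInf S := Rrad_eq η φ μ x
  have hR0 : 0 ≤ R := by rw [hReq]; exact le_csInf hSne (fun r hr => hr.1.le)
  -- η ≤ Fm at R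
  have hge : η ≤ Fm φ μ x R := by
    have hseq : ∀ n : ℕ, η ≤ Fm φ μ x (R + 1/(n+1)) := by
      intro n
      obtain ⟨r, hrS, hrlt⟩ := Real.lt_sInf_add_pos hSne
        (show (0:ℝ) < 1/(n+1) by positivity)
      exact hrS.2.trans (Fm_mono hφnonneg hφLip hφsupp hφint μ x
        (by rw [hReq]; exact hrlt.le))
    have hlim : Tendsto (fun n : ℕ => R + 1/(n+1)) atTop (nhds R) := by
      have := tendsto_one_div_add_atTop_nhds_zero_nat (𝕜 := ℝ)
      have h2 := tendsto_const_nhds (x := R) (f := atTop (α := ℕ)) |>.add this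
      simpa using h2
    exact ge_of_tendsto (Fm_tendsto hφnonneg hφLip hφsupp hφint μ x _ R hlim)
      (Filter.Eventually.of_forall hseq)
  -- R is positive
  have hRpos : 0 < R := by
    rcases hR0.lt_or_eq with h | h
    · exact h
    · exfalso
      have hF0 : Fm φ μ x 0 = 0 := by
        have : ∀ y : Euc d, aker φ x 0 y = 0 := by
          intro y
          rw [aker]
          have hball : closedBall x (0:ℝ) = {x} := closedBall_zero
          rw [hball]
          have hvol : volume ({x} : Set (Euc d)) = 0 := by
            rw [← Metric.sphere_zero]
            exact Measure.addHaar_sphere volume x 0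
          rw [← Measure.restrict_eq_zero] at hvol
          rw [hvol, integral_zero_measure]
        simp only [Fm, this, integral_zero]
      rw [← h] at hge
      rw [hF0] at hge
      linarith
  -- Fm at R ≤ η
  have hle : Fm φ μ x R ≤ η := by
    have hseq : ∀ n : ℕ, Fm φ μ x (R - R/(n+2)) < η := by
      intro n
      have hlt : R - R/(n+2) < R := by
        have : (0:ℝ) < R/(n+2) := by positivity
        linarith
      have hpos : 0 < R - R/(n+2) := by
        rw [sub_pos, div_lt_iff₀ (by positivity)]
        nlinarith
      have hnotS : R - R/(n+2) ∉ S := fun hmem => by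
        have := csInf_le hbdd hmem
        rw [← hReq] at this
        linarith
      rw [hS, Set.mem_setOf_eq, not_and] at hnotS
      exact lt_of_not_ge (hnotS hpos)
    have hlim : Tendsto (fun n : ℕ => R - R/(n+2)) atTop (nhds R) := by
      have h1 : Tendsto (fun n : ℕ => 1/((n:ℝ)+2)) atTop (nhds 0) := by
        have h := (tendsto_one_div_add_atTop_nhds_zero_nat (𝕜 := ℝ)).comp
          (tendsto_add_atTop_nat 1)
        refine h.congr fun n => ?_
        simp only [Function.comp]
        push_cast
        ring
      have h2 := tendsto_const_nhds (x := R) (f := atTop (α := ℕ)) |>.sub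
        (h1.const_mul R)
      simp only [mul_zero, sub_zero] at h2
      convert h2 using 2 with n
      ring
    exact le_of_tendsto (Fm_tendsto hφnonneg hφLip hφsupp hφint μ x _ R hlim)
      (Filter.Eventually.of_forall (fun n => (hseq n).le))
  exact le_antisymm hle hge

end Aux5


section W2sec
variable {d : ℕ}

instance instBorel4 {d : ℕ} : BorelSpace ((Euc d × Euc d) × (Euc d × Euc d)) :=
  Prod.borelSpace

lemma W2_set_nonempty (f g : Measure (Euc d × Euc d))
    [IsProbabilityMeasure f] [IsProbabilityMeasure g] :
    {c : ℝ | ∃ γ : Measure ((Euc d × Euc d) × (Euc d × Euc d)), IsProbabilityMeasure γ ∧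
      γ.map Prod.fst = f ∧ γ.map Prod.snd = g ∧
      c = (∫ p, dist p.1 p.2 ^ 2 ∂γ) ^ ((1 : ℝ) / 2)}.Nonempty := by
  refine ⟨_, f.prod g, inferInstance, ?_, ?_, rfl⟩
  · rw [Measure.map_fst_prod]; simp
  · rw [Measure.map_snd_prod]; simp

lemma W2_elem_nonneg {α : Type*} [MeasurableSpace α] [PseudoMetricSpace α]
    {μ ν : Measure α} {c : ℝ}
    (hc : c ∈ {c : ℝ | ∃ γ : Measure (α × α), IsProbabilityMeasure γ ∧
      γ.map Prod.fst = μ ∧ γ.map Prod.snd = ν ∧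
      c = (∫ p, dist p.1 p.2 ^ 2 ∂γ) ^ ((1 : ℝ) / 2)}) : 0 ≤ c := by
  obtain ⟨γ, _, _, _, rfl⟩ := hc
  exact Real.rpow_nonneg (integral_nonneg fun p => sq_nonneg _) _

lemma W2_nonneg {α : Type*} [MeasurableSpace α] [PseudoMetricSpace α]
    (μ ν : Measure α) : 0 ≤ W2 μ ν :=
  Real.sInf_nonneg fun _ hc => W2_elem_nonneg hc

/-- easy direction of Cauchy–Schwarz on a probability space. -/
lemma integral_le_rpow_half {α : Type*} [MeasurableSpace α] {μ : Measure α}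
    [IsProbabilityMeasure μ] {u : α → ℝ} (hu0 : ∀ a, 0 ≤ u a)
    (h1 : Integrable u μ) (h2 : Integrable (fun a => u a ^ 2) μ) :
    ∫ a, u a ∂μ ≤ (∫ a, u a ^ 2 ∂μ) ^ ((1:ℝ)/2) := by
  set m := ∫ a, u a ∂μ with hm
  have hm0 : 0 ≤ m := integral_nonneg hu0
  have hexp : ∫ a, (u a - m)^2 ∂μ = (∫ a, u a ^ 2 ∂μ) - m^2 := by
    have hptw : (fun a => (u a - m)^2) = fun a => (u a ^ 2 - (2*m) * u a) + m^2 := by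
      funext a; ring
    have i1 : Integrable (fun a => u a ^ 2 - (2*m) * u a) μ := by
      exact h2.sub (h1.const_mul (2*m))
    rw [hptw, integral_add i1 (integrable_const (m^2)),
      integral_sub h2 (h1.const_mul (2*m)), MeasureTheory.integral_const_mul, integral_const]
    simp [measure_univ, smul_eq_mul]
    ring
  have hpos : 0 ≤ ∫ a, (u a - m)^2 ∂μ := integral_nonneg fun a => sq_nonneg _
  have hsq : m^2 ≤ ∫ a, u a ^ 2 ∂μ := by rw [hexp] at hpos; linarith
  calc m ≤ Real.sqrt (∫ a, u a ^ 2 ∂μ) := by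
        rw [show m = Real.sqrt (m^2) from (Real.sqrt_sq hm0).symm]
        exact Real.sqrt_le_sqrt hsq
    _ = _ := Real.sqrt_eq_rpow _

lemma coupling_ae_mem {γ : Measure ((Euc d × Euc d) × (Euc d × Euc d))}
    {f g : Measure (Euc d × Euc d)}
    (hγ1 : γ.map Prod.fst = f) (hγ2 : γ.map Prod.snd = g)
    {A B : Set (Euc d × Euc d)} (hA : MeasurableSet A) (hB : MeasurableSet B)
    (hfA : f Aᶜ = 0) (hgB : g Bᶜ = 0) :
    ∀ᵐ pq ∂γ, pq.1 ∈ A ∧ pq.2 ∈ B := by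
  have h1 : γ (Prod.fst ⁻¹' Aᶜ) = 0 := by
    rw [← Measure.map_apply measurable_fst hA.compl, hγ1]; exact hfA
  have h2 : γ (Prod.snd ⁻¹' Bᶜ) = 0 := by
    rw [← Measure.map_apply measurable_snd hB.compl, hγ2]; exact hgB
  have e1 : ∀ᵐ pq ∂γ, pq.1 ∈ A := by
    rw [ae_iff]; exact h1
  have e2 : ∀ᵐ pq ∂γ, pq.2 ∈ B := by
    rw [ae_iff]; exact h2
  exact e1.and e2

lemma dist_bound_of_compact {A B : Set (Euc d × Euc d)}
    (hA : IsCompact A) (hB : IsCompact B) :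
    ∃ C : ℝ, 0 ≤ C ∧ ∀ p ∈ A, ∀ q ∈ B, dist p q ≤ C := by
  obtain ⟨rA, hrA⟩ := hA.isBounded.subset_closedBall 0
  obtain ⟨rB, hrB⟩ := hB.isBounded.subset_closedBall 0
  refine ⟨max (rA + rB) 0, le_max_right _ _, fun p hp q hq => ?_⟩
  have h1 : dist p 0 ≤ rA := mem_closedBall.mp (hrA hp)
  have h2 : dist q 0 ≤ rB := mem_closedBall.mp (hrB hq)
  calc dist p q ≤ dist p 0 + dist 0 q := dist_triangle _ _ _
    _ ≤ rA + rB := by rw [dist_comm (0 : Euc d × Euc d) q]; linarith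
    _ ≤ max (rA + rB) 0 := le_max_left _ _

lemma integrable_dist_sq_coupling {γ : Measure ((Euc d × Euc d) × (Euc d × Euc d))}
    [IsProbabilityMeasure γ] {A B : Set (Euc d × Euc d)}
    (haemem : ∀ᵐ pq ∂γ, pq.1 ∈ A ∧ pq.2 ∈ B)
    {C : ℝ} (hC0 : 0 ≤ C) (hC : ∀ p ∈ A, ∀ q ∈ B, dist p q ≤ C) :
    Integrable (fun pq : (Euc d × Euc d) × (Euc d × Euc d) => dist pq.1 pq.2) γ ∧
    Integrable (fun pq : (Euc d × Euc d) × (Euc d × Euc d) => dist pq.1 pq.2 ^ 2) γ := by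
  have hmeas : AEStronglyMeasurable
      (fun pq : (Euc d × Euc d) × (Euc d × Euc d) => dist pq.1 pq.2) γ :=
    (continuous_fst.dist continuous_snd).aestronglyMeasurable
  constructor
  · refine (integrable_const C).mono' hmeas ?_
    filter_upwards [haemem] with pq hpq
    rw [Real.norm_eq_abs, abs_of_nonneg dist_nonneg]
    exact hC _ hpq.1 _ hpq.2
  · refine (integrable_const (C^2)).mono' (((continuous_fst.dist continuous_snd).pow 2).aestronglyMeasurable) ?_ -- fix measurability
    filter_upwards [haemem] with pq hpq
    rw [Real.norm_eq_abs, abs_of_nonneg (sq_nonneg _)]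
    exact pow_le_pow_left₀ dist_nonneg (hC _ hpq.1 _ hpq.2) 2

end W2sec
section W2sec2
variable {d : ℕ}

/-- Easy direction of Kantorovich duality: Lipschitz test functions against W2. -/
lemma coupling_bound (f g : Measure (Euc d × Euc d))
    [IsProbabilityMeasure f] [IsProbabilityMeasure g]
    {A B : Set (Euc d × Euc d)} (hA : IsCompact A) (hB : IsCompact B)
    (hfA : f Aᶜ = 0) (hgB : g Bᶜ = 0)
    {G : Type*} [NormedAddCommGroup G] [NormedSpace ℝ G]
    (h : Euc d × Euc d → G) (hc : Continuous h)
    {K : ℝ} (hK : 0 < K)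
    (hLip : ∀ p ∈ A, ∀ q ∈ B, ‖h p - h q‖ ≤ K * dist p q) :
    ‖(∫ p, h p ∂f) - ∫ q, h q ∂g‖ ≤ K * W2 f g := by
  set X : ℝ := ‖(∫ p, h p ∂f) - ∫ q, h q ∂g‖ with hX
  have key : ∀ c ∈ {c : ℝ | ∃ γ : Measure ((Euc d × Euc d) × (Euc d × Euc d)),
      IsProbabilityMeasure γ ∧ γ.map Prod.fst = f ∧ γ.map Prod.snd = g ∧
      c = (∫ p, dist p.1 p.2 ^ 2 ∂γ) ^ ((1 : ℝ) / 2)}, X ≤ K * c := by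
    rintro c ⟨γ, hγP, hγ1, hγ2, rfl⟩
    haveI := hγP
    have haemem := coupling_ae_mem hγ1 hγ2 hA.measurableSet hB.measurableSet hfA hgB
    obtain ⟨CA, hCA⟩ := hA.exists_bound_of_continuousOn hc.continuousOn
    obtain ⟨CB, hCB⟩ := hB.exists_bound_of_continuousOn hc.continuousOn
    have int1 : Integrable (fun pq : (Euc d × Euc d) × (Euc d × Euc d) => h pq.1) γ := by
      refine (integrable_const CA).mono' ((hc.comp continuous_fst).aestronglyMeasurable) ?_
      filter_upwards [haemem] with pq hpq
      exact hCA _ hpq.1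
    have int2 : Integrable (fun pq : (Euc d × Euc d) × (Euc d × Euc d) => h pq.2) γ := by
      refine (integrable_const CB).mono' ((hc.comp continuous_snd).aestronglyMeasurable) ?_
      filter_upwards [haemem] with pq hpq
      exact hCB _ hpq.2
    obtain ⟨C, hC0, hC⟩ := dist_bound_of_compact hA hB
    obtain ⟨intd, intd2⟩ := integrable_dist_sq_coupling haemem hC0 hC
    have heq : (∫ p, h p ∂f) - ∫ q, h q ∂g = ∫ pq, (h pq.1 - h pq.2) ∂γ := by
      rw [← hγ1, ← hγ2, integral_map measurable_fst.aemeasurable hc.aestronglyMeasurable,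
        integral_map measurable_snd.aemeasurable hc.aestronglyMeasurable,
        ← integral_sub int1 int2]
    rw [hX, heq]
    calc ‖∫ pq, (h pq.1 - h pq.2) ∂γ‖ ≤ ∫ pq, ‖h pq.1 - h pq.2‖ ∂γ :=
          norm_integral_le_integral_norm _
      _ ≤ ∫ pq, K * dist pq.1 pq.2 ∂γ := by
          refine integral_mono_ae (int1.sub int2).norm (intd.const_mul K) ?_
          filter_upwards [haemem] with pq hpq
          exact hLip _ hpq.1 _ hpq.2
      _ = K * ∫ pq, dist pq.1 pq.2 ∂γ := MeasureTheory.integral_const_mul K _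
      _ ≤ K * (∫ pq, dist pq.1 pq.2 ^ 2 ∂γ) ^ ((1:ℝ)/2) := by
          refine mul_le_mul_of_nonneg_left ?_ hK.le
          exact integral_le_rpow_half (fun pq => dist_nonneg) intd intd2
  have h1 : X / K ≤ W2 f g :=
    le_csInf (W2_set_nonempty f g) fun c hc' => (div_le_iff₀ hK).mpr
      (by rw [mul_comm]; exact key c hc')
  calc X = K * (X / K) := by field_simp
    _ ≤ K * W2 f g := mul_le_mul_of_nonneg_left h1 hK.le

/-- supports separated by δ force W2 ≥ δ. -/
lemma sep_le_W2 (f g : Measure (Euc d × Euc d))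
    [IsProbabilityMeasure f] [IsProbabilityMeasure g]
    {A B : Set (Euc d × Euc d)} (hA : IsCompact A) (hB : IsCompact B)
    (hfA : f Aᶜ = 0) (hgB : g Bᶜ = 0)
    (δ : ℝ) (hδ : ∀ p ∈ A, ∀ q ∈ B, δ ≤ dist p q) : δ ≤ W2 f g := by
  rcases le_or_gt δ 0 with h | h
  · exact h.trans (W2_nonneg f g)
  refine le_csInf (W2_set_nonempty f g) ?_
  rintro c ⟨γ, hγP, hγ1, hγ2, rfl⟩
  haveI := hγP
  have haemem := coupling_ae_mem hγ1 hγ2 hA.measurableSet hB.measurableSet hfA hgB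
  obtain ⟨C, hC0, hC⟩ := dist_bound_of_compact hA hB
  obtain ⟨intd, intd2⟩ := integrable_dist_sq_coupling haemem hC0 hC
  have hI : δ^2 ≤ ∫ pq, dist pq.1 pq.2 ^ 2 ∂γ := by
    have : ∫ pq : (Euc d × Euc d) × (Euc d × Euc d), δ^2 ∂γ ≤
        ∫ pq, dist pq.1 pq.2 ^ 2 ∂γ := by
      refine integral_mono_ae (integrable_const _) intd2 ?_
      filter_upwards [haemem] with pq hpq
      exact pow_le_pow_left₀ h.le (hδ _ hpq.1 _ hpq.2) 2
    simpa [measure_univ] using this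
  calc δ = (δ^2) ^ ((1:ℝ)/2) := by
        rw [← Real.sqrt_eq_rpow, Real.sqrt_sq h.le]
    _ ≤ (∫ pq, dist pq.1 pq.2 ^ 2 ∂γ) ^ ((1:ℝ)/2) :=
        Real.rpow_le_rpow (sq_nonneg δ) hI (by norm_num)

end W2sec2
section Main
variable {d : ℕ} {σ η : ℝ} {φ : Euc d → ℝ} {Lφ : ℝ≥0}

lemma integrable_smul_vec (hφnonneg : ∀ z, 0 ≤ φ z) (hφLip : LipschitzWith Lφ φ)
    (hφsupp : Function.support φ ⊆ ball 0 σ) (hφint : ∫ z, φ z = 1)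
    (μ : Measure (Euc d × Euc d)) [IsFiniteMeasure μ] {S : Set (Euc d × Euc d)}
    (hμS : μ Sᶜ = 0) (x : Euc d) (r : ℝ) (u : Euc d) {Cw : ℝ}
    (hCw : ∀ yw ∈ S, ‖u - (yw : Euc d × Euc d).2‖ ≤ Cw) :
    Integrable (fun yw : Euc d × Euc d => aker φ x r yw.1 • (u - yw.2)) μ := by
  refine (integrable_const Cw).mono'
    ((((aker_cont hφLip hφsupp x r).comp continuous_fst).smul
      (continuous_const.sub continuous_snd)).aestronglyMeasurable) ?_
  filter_upwards [ae_mem_of_compl_null μ hμS] with yw hyw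
  rw [norm_smul]
  calc ‖aker φ x r yw.1‖ * ‖u - yw.2‖ ≤ 1 * Cw := by
        refine mul_le_mul ?_ (hCw yw hyw) (norm_nonneg _) one_pos.le
        rw [Real.norm_eq_abs, abs_of_nonneg (aker_nonneg hφnonneg x r yw.1)]
        exact aker_le_one hφnonneg hφLip hφsupp hφint x r yw.1
    _ = Cw := one_mul Cw

set_option maxHeartbeats 1000000 in
lemma force_diff_bound [Nontrivial (Euc d)] (hσ : 0 < σ)
    (hη0 : 0 < η) (hη1 : η < 1)
    (hφnonneg : ∀ z, 0 ≤ φ z) (hφLip : LipschitzWith Lφ φ)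
    (hφsupp : Function.support φ ⊆ ball 0 σ) (hφint : ∫ z, φ z = 1)
    (Dx Dv : ℝ)
    (f g : Measure (Euc d × Euc d)) [IsProbabilityMeasure f] [IsProbabilityMeasure g]
    (Sx Sv Sx' Sv' : Set (Euc d))
    (hSx : IsCompact Sx) (hSv : IsCompact Sv) (hSx' : IsCompact Sx') (hSv' : IsCompact Sv')
    (hfA : f (Sx ×ˢ Sv)ᶜ = 0) (hgB : g (Sx' ×ˢ Sv')ᶜ = 0)
    (hdx : diam Sx ≤ Dx) (hdv : diam Sv ≤ Dv) (hdx' : diam Sx' ≤ Dx) (hdv' : diam Sv' ≤ Dv)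
    (x v : Euc d) :
    ‖Force η φ f x v - Force η φ g x v‖ ≤
      (max ((1/η) * ((3*Dv+1) * ((2*Lφ*(volume (ball (0:Euc d) σ)).toReal)+1)
          + (1 + (2*Lφ*(volume (ball (0:Euc d) σ)).toReal)*Dv))) (4*Dv+1)) * W2 f g := by
  set La : ℝ := 2*Lφ*(volume (ball (0:Euc d) σ)).toReal with hLa
  have hLa0 : 0 ≤ La := by positivity
  set W : ℝ := W2 f g with hW
  have hW0 : 0 ≤ W := W2_nonneg f g
  set A : Set (Euc d × Euc d) := Sx ×ˢ Sv with hAdef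
  set B : Set (Euc d × Euc d) := Sx' ×ˢ Sv' with hBdef
  have hAc : IsCompact A := hSx.prod hSv
  have hBc : IsCompact B := hSx'.prod hSv'
  have haef : ∀ᵐ yw ∂f, yw ∈ A := ae_mem_of_compl_null f hfA
  have haeg : ∀ᵐ yw ∂g, yw ∈ B := ae_mem_of_compl_null g hgB
  -- nonemptiness of supports
  have hAne : A.Nonempty := by
    by_contra h
    rw [Set.not_nonempty_iff_eq_empty] at h
    rw [h, Set.compl_empty] at hfA
    simp [measure_univ] at hfA
  have hBne : B.Nonempty := by
    by_contra h
    rw [Set.not_nonempty_iff_eq_empty] at h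
    rw [h, Set.compl_empty] at hgB
    simp [measure_univ] at hgB
  obtain ⟨p₁, hp₁⟩ := hAne
  obtain ⟨q₀, hq₀⟩ := hBne
  set w₁ : Euc d := p₁.2 with hw₁
  set w₀ : Euc d := q₀.2 with hw₀
  have hw₁Sv : w₁ ∈ Sv := hp₁.2
  have hw₀Sv' : w₀ ∈ Sv' := hq₀.2
  have hDv0 : 0 ≤ Dv := diam_nonneg.trans hdv
  -- radii and mass identities
  set Rf : ℝ := Rrad η φ f x with hRf
  set Rg : ℝ := Rrad η φ g x with hRg
  have mass_f : Fm φ f x Rf = η :=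
    mass_identity hσ hη0 hη1 hφnonneg hφLip hφsupp hφint f hSx hSv hfA x
  have mass_g : Fm φ g x Rg = η :=
    mass_identity hσ hη0 hη1 hφnonneg hφLip hφsupp hφint g hSx' hSv' hgB x
  -- velocity separation bound
  have hsep : dist w₁ w₀ - 2*Dv ≤ W := by
    refine sep_le_W2 f g hAc hBc hfA hgB _ ?_
    intro p hp q hq
    have h1 : dist w₁ p.2 ≤ Dv := (dist_le_diam_of_mem hSv.isBounded hw₁Sv hp.2).trans hdv
    have h2 : dist q.2 w₀ ≤ Dv := (dist_le_diam_of_mem hSv'.isBounded hq.2 hw₀Sv').trans hdv'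
    have h3 : dist p.2 q.2 ≤ dist p q := by
      rw [Prod.dist_eq]; exact le_max_right _ _
    have h4 : dist w₁ w₀ ≤ dist w₁ p.2 + dist p.2 q.2 + dist q.2 w₀ := dist_triangle4 _ _ _ _
    linarith
  set Mv : ℝ := 3*Dv + W with hMv
  have hMv0 : 0 ≤ Mv := by positivity
  have hMvf : ∀ w ∈ Sv, ‖w₀ - w‖ ≤ Mv := by
    intro w hw
    have h1 : dist w₀ w₁ ≤ 2*Dv + W := by rw [dist_comm]; linarith
    have h2 : dist w₁ w ≤ Dv := (dist_le_diam_of_mem hSv.isBounded hw₁Sv hw).trans hdv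
    calc ‖w₀ - w‖ = dist w₀ w := by rw [dist_eq_norm]
      _ ≤ dist w₀ w₁ + dist w₁ w := dist_triangle _ _ _
      _ ≤ Mv := by rw [hMv]; linarith
  have hMvg : ∀ w ∈ Sv', ‖w₀ - w‖ ≤ Dv := by
    intro w hw
    calc ‖w₀ - w‖ = dist w₀ w := by rw [dist_eq_norm]
      _ ≤ Dv := (dist_le_diam_of_mem hSv'.isBounded hw₀Sv' hw).trans hdv'
  -- integrability facts
  have intaf : Integrable (fun yw : Euc d × Euc d => aker φ x Rf yw.1) f :=
    integrable_aker_fst hφnonneg hφLip hφsupp hφint f x Rf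
  have intagf : Integrable (fun yw : Euc d × Euc d => aker φ x Rg yw.1) f :=
    integrable_aker_fst hφnonneg hφLip hφsupp hφint f x Rg
  have intagg : Integrable (fun yw : Euc d × Euc d => aker φ x Rg yw.1) g :=
    integrable_aker_fst hφnonneg hφLip hφsupp hφint g x Rg
  have hMvf' : ∀ yw ∈ A, ‖w₀ - (yw : Euc d × Euc d).2‖ ≤ Mv := fun yw hyw => hMvf _ hyw.2
  have hMvg' : ∀ yw ∈ B, ‖w₀ - (yw : Euc d × Euc d).2‖ ≤ Dv := fun yw hyw => hMvg _ hyw.2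
  have intIf : Integrable (fun yw : Euc d × Euc d => aker φ x Rf yw.1 • (w₀ - yw.2)) f :=
    integrable_smul_vec hφnonneg hφLip hφsupp hφint f hfA x Rf w₀ hMvf'
  have intIgf : Integrable (fun yw : Euc d × Euc d => aker φ x Rg yw.1 • (w₀ - yw.2)) f :=
    integrable_smul_vec hφnonneg hφLip hφsupp hφint f hfA x Rg w₀ hMvf'
  have intIg : Integrable (fun yw : Euc d × Euc d => aker φ x Rg yw.1 • (w₀ - yw.2)) g :=
    integrable_smul_vec hφnonneg hφLip hφsupp hφint g hgB x Rg w₀ hMvg'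
  -- Force decomposition
  set If : Euc d := ∫ yw, aker φ x Rf yw.1 • (w₀ - yw.2) ∂f with hIf
  set Ig : Euc d := ∫ yw, aker φ x Rg yw.1 • (w₀ - yw.2) ∂g with hIg
  have hvCf : ∀ yw ∈ A, ‖(v - w₀) + (w₀ - (yw : Euc d × Euc d).2)‖ ≤ ‖v - w₀‖ + Mv := by
    intro yw hyw
    exact (norm_add_le _ _).trans (by linarith [hMvf' yw hyw])
  have forcesplit : ∀ (μ : Measure (Euc d × Euc d)) (R : ℝ), IsProbabilityMeasure μ →
      μ ((Sx ×ˢ Sv) : Set (Euc d × Euc d))ᶜ = 0 → True := fun _ _ _ _ => trivial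
  have hsplitf : ∫ yw, aker φ x Rf yw.1 • (v - yw.2) ∂f
      = (Fm φ f x Rf) • (v - w₀) + If := by
    have hptw : ∀ yw : Euc d × Euc d, aker φ x Rf yw.1 • (v - yw.2)
        = aker φ x Rf yw.1 • (v - w₀) + aker φ x Rf yw.1 • (w₀ - yw.2) := by
      intro yw
      rw [← smul_add]
      congr 1
      abel
    rw [integral_congr_ae (Filter.Eventually.of_forall hptw),
      integral_add (intaf.smul_const (v - w₀)) intIf, integral_smul_const]
    rfl
  have hsplitg : ∫ yw, aker φ x Rg yw.1 • (v - yw.2) ∂g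
      = (Fm φ g x Rg) • (v - w₀) + Ig := by
    have hptw : ∀ yw : Euc d × Euc d, aker φ x Rg yw.1 • (v - yw.2)
        = aker φ x Rg yw.1 • (v - w₀) + aker φ x Rg yw.1 • (w₀ - yw.2) := by
      intro yw
      rw [← smul_add]
      congr 1
      abel
    rw [integral_congr_ae (Filter.Eventually.of_forall hptw),
      integral_add (intagg.smul_const (v - w₀)) intIg, integral_smul_const]
    rfl
  have hΔ : Force η φ f x v - Force η φ g x v = (1/η) • (If - Ig) := by
    have h1 : Force η φ f x v = (1/η) • ((Fm φ f x Rf) • (v - w₀) + If) := by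
      rw [Force]; rw [← hsplitf]; rfl
    have h2 : Force η φ g x v = (1/η) • ((Fm φ g x Rg) • (v - w₀) + Ig) := by
      rw [Force]; rw [← hsplitg]; rfl
    rw [h1, h2, ← smul_sub]
    congr 1
    rw [mass_f, mass_g]
    abel
  have hnormΔ : ‖Force η φ f x v - Force η φ g x v‖ = (1/η) * ‖If - Ig‖ := by
    rw [hΔ, norm_smul, Real.norm_eq_abs, abs_of_pos (by positivity)]
  -- T2: coupling bound for the test function with radius Rg
  set h2fun : Euc d × Euc d → Euc d := fun pq => aker φ x Rg pq.1 • (w₀ - pq.2) with hh2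
  have hcont2 : Continuous h2fun :=
    ((aker_cont hφLip hφsupp x Rg).comp continuous_fst).smul
      (continuous_const.sub continuous_snd)
  have hK2 : (0:ℝ) < 1 + La*Dv := by positivity
  have hT2 : ‖(∫ p, h2fun p ∂f) - ∫ q, h2fun q ∂g‖ ≤ (1 + La*Dv) * W := by
    refine coupling_bound f g hAc hBc hfA hgB h2fun hcont2 hK2 ?_
    intro p hp q hq
    have hdec : h2fun p - h2fun q
        = aker φ x Rg p.1 • (q.2 - p.2) + (aker φ x Rg p.1 - aker φ x Rg q.1) • (w₀ - q.2) := by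
      rw [hh2]
      simp only [sub_smul, smul_sub]
      abel
    rw [hdec]
    have hb1 : ‖aker φ x Rg p.1 • (q.2 - p.2)‖ ≤ 1 * dist p q := by
      rw [norm_smul, Real.norm_eq_abs, abs_of_nonneg (aker_nonneg hφnonneg x Rg p.1)]
      refine mul_le_mul (aker_le_one hφnonneg hφLip hφsupp hφint x Rg p.1) ?_ (norm_nonneg _)
        one_pos.le
      calc ‖q.2 - p.2‖ = dist p.2 q.2 := by rw [dist_eq_norm, norm_sub_rev]
        _ ≤ dist p q := by rw [Prod.dist_eq]; exact le_max_right _ _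
    have hb2 : ‖(aker φ x Rg p.1 - aker φ x Rg q.1) • (w₀ - q.2)‖ ≤ (La * dist p q) * Dv := by
      rw [norm_smul, Real.norm_eq_abs]
      refine mul_le_mul ?_ (hMvg' q hq) (norm_nonneg _) (by positivity)
      calc |aker φ x Rg p.1 - aker φ x Rg q.1| ≤ La * dist p.1 q.1 :=
            aker_lip hφLip hφsupp x Rg p.1 q.1
        _ ≤ La * dist p q := by
            refine mul_le_mul_of_nonneg_left ?_ hLa0
            rw [Prod.dist_eq]; exact le_max_left _ _
    calc ‖aker φ x Rg p.1 • (q.2 - p.2) + (aker φ x Rg p.1 - aker φ x Rg q.1) • (w₀ - q.2)‖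
        ≤ ‖aker φ x Rg p.1 • (q.2 - p.2)‖ + ‖(aker φ x Rg p.1 - aker φ x Rg q.1) • (w₀ - q.2)‖ :=
          norm_add_le _ _
      _ ≤ 1 * dist p q + (La * dist p q) * Dv := add_le_add hb1 hb2
      _ = (1 + La*Dv) * dist p q := by ring
  -- scalar mass comparison
  have hFmdiff : |Fm φ f x Rg - Fm φ g x Rg| ≤ (La+1) * W := by
    have := coupling_bound f g hAc hBc hfA hgB
      (fun pq : Euc d × Euc d => aker φ x Rg pq.1)
      ((aker_cont hφLip hφsupp x Rg).comp continuous_fst)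
      (K := La+1) (by positivity) ?_
    · rw [← Real.norm_eq_abs]
      exact this
    · intro p hp q hq
      rw [Real.norm_eq_abs]
      calc |aker φ x Rg p.1 - aker φ x Rg q.1| ≤ La * dist p.1 q.1 :=
            aker_lip hφLip hφsupp x Rg p.1 q.1
        _ ≤ (La+1) * dist p q := by
            refine mul_le_mul (by linarith) ?_ dist_nonneg (by linarith)
            rw [Prod.dist_eq]; exact le_max_left _ _
  -- T1: the radius comparison term
  have habs_int : ∫ yw, |aker φ x Rf yw.1 - aker φ x Rg yw.1| ∂f ≤ (La+1) * W := by
    rcases le_total Rf Rg with hR | hR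
    · have hptw : ∀ yw : Euc d × Euc d, |aker φ x Rf yw.1 - aker φ x Rg yw.1|
          = aker φ x Rg yw.1 - aker φ x Rf yw.1 := by
        intro yw
        rw [abs_sub_comm, abs_of_nonneg (sub_nonneg.mpr (aker_mono hφnonneg hφLip hφsupp x hR yw.1))]
      rw [integral_congr_ae (Filter.Eventually.of_forall hptw), integral_sub intagf intaf]
      have : (∫ yw, aker φ x Rg yw.1 ∂f) - (∫ yw, aker φ x Rf yw.1 ∂f)
          = Fm φ f x Rg - Fm φ f x Rf := rfl
      rw [this, mass_f, ← mass_g]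
      calc Fm φ f x Rg - Fm φ g x Rg ≤ |Fm φ f x Rg - Fm φ g x Rg| := le_abs_self _
        _ ≤ (La+1) * W := hFmdiff
    · have hptw : ∀ yw : Euc d × Euc d, |aker φ x Rf yw.1 - aker φ x Rg yw.1|
          = aker φ x Rf yw.1 - aker φ x Rg yw.1 := by
        intro yw
        rw [abs_of_nonneg (sub_nonneg.mpr (aker_mono hφnonneg hφLip hφsupp x hR yw.1))]
      rw [integral_congr_ae (Filter.Eventually.of_forall hptw), integral_sub intaf intagf]
      have : (∫ yw, aker φ x Rf yw.1 ∂f) - (∫ yw, aker φ x Rg yw.1 ∂f)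
          = Fm φ f x Rf - Fm φ f x Rg := rfl
      rw [this, mass_f, ← mass_g]
      calc Fm φ g x Rg - Fm φ f x Rg ≤ |Fm φ f x Rg - Fm φ g x Rg| := by
            rw [abs_sub_comm]; exact le_abs_self _
        _ ≤ (La+1) * W := hFmdiff
  have hT1 : ‖∫ yw, (aker φ x Rf yw.1 - aker φ x Rg yw.1) • (w₀ - yw.2) ∂f‖
      ≤ Mv * ((La+1) * W) := by
    have intT1 : Integrable
        (fun yw : Euc d × Euc d => (aker φ x Rf yw.1 - aker φ x Rg yw.1) • (w₀ - yw.2)) f := by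
      have : (fun yw : Euc d × Euc d => (aker φ x Rf yw.1 - aker φ x Rg yw.1) • (w₀ - yw.2))
          = fun yw => aker φ x Rf yw.1 • (w₀ - yw.2) - aker φ x Rg yw.1 • (w₀ - yw.2) := by
        funext yw; rw [sub_smul]
      rw [this]
      exact intIf.sub intIgf
    have intabs : Integrable
        (fun yw : Euc d × Euc d => |aker φ x Rf yw.1 - aker φ x Rg yw.1| * Mv) f :=
      (intaf.sub intagf).abs.mul_const Mv
    calc ‖∫ yw, (aker φ x Rf yw.1 - aker φ x Rg yw.1) • (w₀ - yw.2) ∂f‖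
        ≤ ∫ yw, ‖(aker φ x Rf yw.1 - aker φ x Rg yw.1) • (w₀ - yw.2)‖ ∂f :=
          norm_integral_le_integral_norm _
      _ ≤ ∫ yw, |aker φ x Rf yw.1 - aker φ x Rg yw.1| * Mv ∂f := by
          refine integral_mono_ae intT1.norm intabs ?_
          filter_upwards [haef] with yw hyw
          rw [norm_smul, Real.norm_eq_abs]
          exact mul_le_mul_of_nonneg_left (hMvf' yw hyw) (abs_nonneg _)
      _ = (∫ yw, |aker φ x Rf yw.1 - aker φ x Rg yw.1| ∂f) * Mv := integral_mul_const Mv _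
      _ ≤ ((La+1) * W) * Mv := mul_le_mul_of_nonneg_right habs_int hMv0
      _ = Mv * ((La+1) * W) := by ring
  -- split If - Ig
  have hsplit : If - Ig
      = (∫ yw, (aker φ x Rf yw.1 - aker φ x Rg yw.1) • (w₀ - yw.2) ∂f)
        + ((∫ p, h2fun p ∂f) - ∫ q, h2fun q ∂g) := by
    have hT1eq : ∫ yw, (aker φ x Rf yw.1 - aker φ x Rg yw.1) • (w₀ - yw.2) ∂f
        = If - ∫ p, h2fun p ∂f := by
      rw [← integral_sub intIf intIgf]
      congr 1
      funext yw
      rw [sub_smul]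
    rw [hT1eq, hh2]
    abel
  -- Lipschitz-type bound
  have hbound1 : ‖Force η φ f x v - Force η φ g x v‖
      ≤ (1/η) * (Mv * ((La+1)*W) + (1 + La*Dv) * W) := by
    rw [hnormΔ]
    refine mul_le_mul_of_nonneg_left ?_ (by positivity)
    rw [hsplit]
    exact (norm_add_le _ _).trans (add_le_add hT1 hT2)
  -- absolute bound
  have habsf : ‖If‖ ≤ η * Mv := by
    calc ‖If‖ ≤ ∫ yw, ‖aker φ x Rf yw.1 • (w₀ - yw.2)‖ ∂f := norm_integral_le_integral_norm _
      _ ≤ ∫ yw, aker φ x Rf yw.1 * Mv ∂f := by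
          refine integral_mono_ae intIf.norm (intaf.mul_const Mv) ?_
          filter_upwards [haef] with yw hyw
          rw [norm_smul, Real.norm_eq_abs, abs_of_nonneg (aker_nonneg hφnonneg x Rf yw.1)]
          exact mul_le_mul_of_nonneg_left (hMvf' yw hyw) (aker_nonneg hφnonneg x Rf yw.1)
      _ = (∫ yw, aker φ x Rf yw.1 ∂f) * Mv := integral_mul_const Mv _
      _ = η * Mv := by rw [show (∫ yw, aker φ x Rf yw.1 ∂f) = Fm φ f x Rf from rfl, mass_f]
  have habsg : ‖Ig‖ ≤ η * Dv := by
    calc ‖Ig‖ ≤ ∫ yw, ‖aker φ x Rg yw.1 • (w₀ - yw.2)‖ ∂g := norm_integral_le_integral_norm _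
      _ ≤ ∫ yw, aker φ x Rg yw.1 * Dv ∂g := by
          refine integral_mono_ae intIg.norm (intagg.mul_const Dv) ?_
          filter_upwards [haeg] with yw hyw
          rw [norm_smul, Real.norm_eq_abs, abs_of_nonneg (aker_nonneg hφnonneg x Rg yw.1)]
          exact mul_le_mul_of_nonneg_left (hMvg' yw hyw) (aker_nonneg hφnonneg x Rg yw.1)
      _ = (∫ yw, aker φ x Rg yw.1 ∂g) * Dv := integral_mul_const Dv _
      _ = η * Dv := by rw [show (∫ yw, aker φ x Rg yw.1 ∂g) = Fm φ g x Rg from rfl, mass_g]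
  have hbound2 : ‖Force η φ f x v - Force η φ g x v‖ ≤ 4*Dv + W := by
    rw [hnormΔ]
    have h1 : ‖If - Ig‖ ≤ η * Mv + η * Dv := (norm_sub_le _ _).trans (add_le_add habsf habsg)
    have h2 : (1/η) * ‖If - Ig‖ ≤ (1/η) * (η * Mv + η * Dv) :=
      mul_le_mul_of_nonneg_left h1 (by positivity)
    calc (1/η) * ‖If - Ig‖ ≤ (1/η) * (η * Mv + η * Dv) := h2
      _ = Mv + Dv := by field_simp
      _ = 4*Dv + W := by rw [hMv]; ring
  -- combine
  clear_value La W Mv If Ig Rf Rg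
  rcases le_or_gt W 1 with hWle | hWgt
  · refine hbound1.trans ?_
    have hstep : Mv * ((La+1)*W) ≤ ((3*Dv+1)*(La+1)) * W := by
      have : Mv ≤ 3*Dv + 1 := by rw [hMv]; linarith
      calc Mv * ((La+1)*W) = (Mv * (La+1)) * W := by ring
        _ ≤ ((3*Dv+1)*(La+1)) * W := by
            refine mul_le_mul_of_nonneg_right ?_ hW0
            exact mul_le_mul_of_nonneg_right this (by positivity)
    calc (1/η) * (Mv * ((La+1)*W) + (1 + La*Dv) * W)
        ≤ (1/η) * (((3*Dv+1)*(La+1)) * W + (1 + La*Dv) * W) := by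
          refine mul_le_mul_of_nonneg_left ?_ (by positivity)
          linarith
      _ = ((1/η) * ((3*Dv+1)*(La+1) + (1 + La*Dv))) * W := by ring
      _ ≤ (max ((1/η) * ((3*Dv+1)*(La+1) + (1 + La*Dv))) (4*Dv+1)) * W :=
          mul_le_mul_of_nonneg_right (le_max_left _ _) hW0
  · refine hbound2.trans ?_
    have h1 : 4*Dv + W ≤ (4*Dv+1) * W := by nlinarith
    refine h1.trans ?_
    exact mul_le_mul_of_nonneg_right (le_max_right _ _) hW0

end Main
/-- pointwise stability of the force with respect to the
2-Wasserstein distance, with a constant depending only on `φ, η, d, D_x, D_v`. -/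
theorem stmt_6 {d : ℕ} (σ η Dx Dv : ℝ) (hσ : 0 < σ)
    (hη0 : 0 < η) (hη1 : η < 1)
    (φ : EuclideanSpace ℝ (Fin d) → ℝ) (Lφ : ℝ≥0)
    (hφnonneg : ∀ z, 0 ≤ φ z)
    (hφLip : LipschitzWith Lφ φ)
    (hφsupp : Function.support φ ⊆ ball 0 σ)
    (hφint : ∫ z, φ z = 1) :
    ∃ c₁ : ℝ, 0 ≤ c₁ ∧
      ∀ (f g : Measure (EuclideanSpace ℝ (Fin d) × EuclideanSpace ℝ (Fin d))),
        IsProbabilityMeasure f → IsProbabilityMeasure g →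
        ∀ (Sx Sv Sx' Sv' : Set (EuclideanSpace ℝ (Fin d))),
          IsCompact Sx → IsCompact Sv → IsCompact Sx' → IsCompact Sv' →
          f (Sx ×ˢ Sv)ᶜ = 0 → g (Sx' ×ˢ Sv')ᶜ = 0 →
          Metric.diam Sx ≤ Dx → Metric.diam Sv ≤ Dv →
          Metric.diam Sx' ≤ Dx → Metric.diam Sv' ≤ Dv →
          ∀ x v, ‖Force η φ f x v - Force η φ g x v‖ ≤ c₁ * W2 f g := by
  rcases Nat.eq_zero_or_pos d with hd | hd
  · subst hd
    refine ⟨1, zero_le_one, ?_⟩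
    intro f g hf hg Sx Sv Sx' Sv' _ _ _ _ _ _ _ _ _ _ x v
    have hzero : Force η φ f x v - Force η φ g x v = 0 := Subsingleton.elim _ _
    rw [hzero, norm_zero, one_mul]
    exact W2_nonneg f g
  · haveI : Nontrivial (EuclideanSpace ℝ (Fin d)) := by
      refine ⟨⟨0, EuclideanSpace.single ⟨0, hd⟩ 1, ?_⟩⟩
      intro h
      have := congrArg (fun u => ‖u‖) h
      simp [EuclideanSpace.norm_single] at this
    set La : ℝ := 2*Lφ*(volume (ball (0 : EuclideanSpace ℝ (Fin d)) σ)).toReal with hLa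
    set c₀ : ℝ := max ((1/η) * ((3*Dv+1) * (La+1) + (1 + La*Dv))) (4*Dv+1) with hc₀
    refine ⟨max c₀ 0, le_max_right _ _, ?_⟩
    intro f g hf hg Sx Sv Sx' Sv' hSx hSv hSx' hSv' hfA hgB hdx hdv hdx' hdv' x v
    haveI := hf; haveI := hg
    have key := force_diff_bound hσ hη0 hη1 hφnonneg hφLip hφsupp hφint Dx Dv f g
      Sx Sv Sx' Sv' hSx hSv hSx' hSv' hfA hgB hdx hdv hdx' hdv' x v
    refine key.trans ?_
    exact mul_le_mul_of_nonneg_right (le_max_left _ _) (W2_nonneg f g)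
end
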